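/- arXiv:1502.01793 — 2 statements merged into one kernel-verified Lean document; each statement's English description precedes it below -/
import Mathlib

section
/- Let 0 < t < w(X)/2, so that B₋ₜ(X) ≠ ∅. If S ⊆ ℂ is a set such that S + L is a t-covering of B₋ₜ(X) + L, then S + L is a (ν₂(θ)·t)-covering of all of ℂ. -/
open MeasureTheory Set Filter

noncomputable section

/-- The lattice `L = ℤη₁ + ℤη₂`. -/
def lat (η₁ η₂ : ℂ) : Set ℂ := {d : ℂ | ∃ m n : ℤ, d = (m : ℂ) * η₁ + (n : ℂ) * η₂}

/-- The fundamental domain `X = {ξ + xη₁ + yη₂ : x, y ∈ [0,1)}`. -/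
def fund (ξ η₁ η₂ : ℂ) : Set ℂ :=
  {z : ℂ | ∃ x y : ℝ, x ∈ Set.Ico (0:ℝ) 1 ∧ y ∈ Set.Ico (0:ℝ) 1 ∧
    z = ξ + (x : ℂ) * η₁ + (y : ℂ) * η₂}

/-- Covering radius of the lattice: infimum of `R > 0` such that every point of `ℂ`
is within distance `R` of a lattice point. -/
def covRad (η₁ η₂ : ℂ) : ℝ :=
  sInf {R : ℝ | 0 < R ∧ ∀ z : ℂ, ∃ d ∈ lat η₁ η₂, dist z d ≤ R}

/-- The constant ν₁(θ). -/
def nu1 (θ : ℝ) : ℝ :=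
  if 1 / 2 < Real.tan (θ / 2) ∧ Real.tan (θ / 2) < 2 then 2
  else (1 + |Real.cos θ|) / (2 * (Real.sin θ + |Real.cos θ| - 1))

/-- The constant ν₂(θ). -/
def nu2 (θ : ℝ) : ℝ :=
  1 + Real.sqrt 2 / (Real.sin θ * Real.sqrt (1 + |Real.cos θ|))

/-- The width `w(X) = min{|η₁|, |η₂|}·sin θ`. -/
def width (θ : ℝ) (η₁ η₂ : ℂ) : ℝ :=
  min (‖η₁‖) (‖η₂‖) * Real.sin θ

/-- An ACIM of `T` on `X`: a Borel probability measure concentrated on `X`,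
`T`-invariant, and absolutely continuous w.r.t. 2-dimensional Lebesgue measure. -/
def IsACIM (X : Set ℂ) (T : ℂ → ℂ) (μ : Measure ℂ) : Prop :=
  IsProbabilityMeasure μ ∧ μ Xᶜ = 0 ∧
    (∀ A : Set ℂ, MeasurableSet A → μ (T ⁻¹' A) = μ A) ∧ μ ≪ volume

/-- `S` is a finite union of (line) segments. -/
def IsFUS (S : Set ℂ) : Prop :=
  ∃ F : Finset (ℂ × ℂ), S = ⋃ p ∈ F, segment ℝ p.1 p.2

/-- A Pisot number: a real algebraic integer `β > 1` all of whose other conjugates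
have absolute value strictly less than 1. -/
def IsPisot (β : ℝ) : Prop :=
  1 < β ∧ IsIntegral ℤ β ∧
    ∀ z : ℂ, Polynomial.aeval z (minpoly ℤ β) = 0 → z ≠ (β : ℂ) → ‖z‖ < 1

/-- `B₋ₜ(A)`: the points of `A` at distance at least `t` from the boundary of `A`. -/
def innerPart (t : ℝ) (A : Set ℂ) : Set ℂ := {x ∈ A | t ≤ Metric.infDist x (frontier A)}

/-- `S` is a `t`-covering of `A`: every point of `A` is within distance `t` of `S`. -/
def IsCovering (t : ℝ) (S A : Set ℂ) : Prop := ∀ x ∈ A, ∃ s ∈ S, dist x s ≤ t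

/-- `Y = X ∖ ⋃_{n ∈ ℤ} Tⁿ(∂X)`: removal of all forward images and preimages
of the boundary. -/
def Yset (X : Set ℂ) (T : ℂ → ℂ) : Set ℂ :=
  X \ ((⋃ n : ℕ, T^[n] '' frontier X) ∪ (⋃ n : ℕ, {z ∈ X | T^[n] z ∈ frontier X}))

/-!
Write `z - ξ = p η₁ + q η₂`. The point `ξ + x η₁ + y η₂` with `x, y ∈ [0, 1)` is at distance
`x |η₁| sin θ` from the side of `X` through `ξ` parallel to `η₂`, so it lies in `B₋ₜ(X)` as soon as
`x ∈ [δ₁, 1 - δ₁]` and `y ∈ [δ₂, 1 - δ₂]`, where `δᵢ = t / (|ηᵢ| sin θ) ≤ 1/2`. Hence only the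
bands `|p - n| < δ₁` and `|q - n| < δ₂` (`n ∈ ℤ`) can be missed by `B₋ₜ(X) + L`. A coordinate in a
band is pushed to the nearer edge of the band, which costs at most `δᵢ |ηᵢ| = t / sin θ`. When both
coordinates lie in bands, `z` lies in the rhombus with vertices `n₁ η₁ + n₂ η₂ ± δ₁ η₁ ± δ₂ η₂`,
of side `t / sin θ` and angle `θ`, and every point of that rhombus is within its circumradius
`√2 t / (sin θ √(1 + |cos θ|)) = (ν₂(θ) - 1) t` of one of the vertices. The hypothesis on `S`
adds another `t`.
-/

open scoped InnerProductSpace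
open ComplexConjugate

section Rhombus

variable {c x y : ℝ}

lemma rhombus_bound_near_acute_vertex (hc0 : 0 ≤ c) (hc1 : c ≤ 1) (hyx : y ≤ x) (hx : x ≤ 1)
    (h : c * (1 - x) ≤ y) :
    (1 + c) * ((x - 1) ^ 2 + (y - 1) ^ 2 + 2 * c * (x - 1) * (y - 1)) ≤ 2 := by
  nlinarith [mul_nonneg (by nlinarith : (0:ℝ) ≤ 2 - ((1+c)*(2-x-y) + (1-c)*(x-y)))
      (by nlinarith : (0:ℝ) ≤ 2 + ((1+c)*(2-x-y) + (1-c)*(x-y))),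
    mul_nonneg (mul_nonneg (by linarith : (0:ℝ) ≤ 1-c) (by linarith : (0:ℝ) ≤ x-y))
      (by nlinarith : (0:ℝ) ≤ (1+c)*(2*(2-x-y)-(x-y)) + (1-c)*(x-y))]

lemma rhombus_bound_near_obtuse_vertex (hc0 : 0 ≤ c) (hc1 : c ≤ 1) (hy : 0 ≤ y) (hyx : y ≤ x)
    (hx : x ≤ 1) (h : y ≤ c * (1 - x)) :
    (1 + c) * ((x - 1) ^ 2 + (y + 1) ^ 2 + 2 * c * (x - 1) * (y + 1)) ≤ 2 := by
  nlinarith [mul_nonneg (by nlinarith : (0:ℝ) ≤ 2 - (1-c)*(2-x+y) - (1+c)*(x+y))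
      (by nlinarith : (0:ℝ) ≤ 2 - (1-c)*(2-x+y) + (1+c)*(x+y)),
    mul_nonneg (mul_nonneg (by linarith : (0:ℝ) ≤ 1-c) (by linarith : (0:ℝ) ≤ 2-x+y))
      (by nlinarith : (0:ℝ) ≤ 2 - (2-x+y))]

lemma rhombus_bound_of_opposite_signs (hc0 : 0 ≤ c) (hc1 : c ≤ 1) (hx0 : 0 ≤ x) (hx : x ≤ 1)
    (hy0 : y ≤ 0) (hy : -1 ≤ y) :
    (1 + c) * ((x - 1) ^ 2 + (y + 1) ^ 2 + 2 * c * (x - 1) * (y + 1)) ≤ 2 := by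
  have hu : (1 - x) ^ 2 ≤ 1 - x := by nlinarith
  have hw : (1 + y) ^ 2 ≤ 1 + y := by nlinarith
  nlinarith [mul_nonneg (mul_nonneg hc0 (by linarith : (0:ℝ) ≤ 1 - x))
      (by linarith : (0:ℝ) ≤ 1 + y),
    mul_nonneg (by linarith : (0:ℝ) ≤ 1 - x) (by linarith : (0:ℝ) ≤ 1 + y),
    mul_nonneg hx0 (by linarith : (0:ℝ) ≤ -y)]

lemma exists_rhombus_vertex_of_le (hc0 : 0 ≤ c) (hc1 : c ≤ 1) (hy : 0 ≤ y) (hyx : y ≤ x)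
    (hx : x ≤ 1) :
    ∃ σ₁ σ₂ : ℝ, |σ₁| = 1 ∧ |σ₂| = 1 ∧
      (1 + c) * ((x - σ₁) ^ 2 + (y - σ₂) ^ 2 + 2 * c * (x - σ₁) * (y - σ₂)) ≤ 2 := by
  rcases le_total (c * (1 - x)) y with h | h
  · exact ⟨1, 1, abs_one, abs_one, rhombus_bound_near_acute_vertex hc0 hc1 hyx hx h⟩
  · exact ⟨1, -1, abs_one, by simp, by
      linear_combination rhombus_bound_near_obtuse_vertex hc0 hc1 hy hyx hx h⟩

lemma exists_rhombus_vertex_of_nonneg (hc0 : 0 ≤ c) (hc1 : c ≤ 1) (hx : |x| ≤ 1) (hy : |y| ≤ 1) :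
    ∃ σ₁ σ₂ : ℝ, |σ₁| = 1 ∧ |σ₂| = 1 ∧
      (1 + c) * ((x - σ₁) ^ 2 + (y - σ₂) ^ 2 + 2 * c * (x - σ₁) * (y - σ₂)) ≤ 2 := by
  rw [abs_le] at hx hy
  rcases le_total 0 x with hx0 | hx0 <;> rcases le_total 0 y with hy0 | hy0
  · rcases le_total y x with hyx | hxy
    · exact exists_rhombus_vertex_of_le hc0 hc1 hy0 hyx hx.2
    · obtain ⟨σ₁, σ₂, h₁, h₂, h⟩ := exists_rhombus_vertex_of_le hc0 hc1 hx0 hxy hy.2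
      exact ⟨σ₂, σ₁, h₂, h₁, by linear_combination h⟩
  · exact ⟨1, -1, abs_one, by simp, by
      linear_combination rhombus_bound_of_opposite_signs hc0 hc1 hx0 hx.2 hy0 hy.1⟩
  · exact ⟨-1, 1, by simp, abs_one, by
      linear_combination rhombus_bound_of_opposite_signs hc0 hc1 hy0 hy.2 hx0 hx.1⟩
  · rcases le_total (-y) (-x) with hyx | hxy
    · obtain ⟨σ₁, σ₂, h₁, h₂, h⟩ :=
        exists_rhombus_vertex_of_le hc0 hc1 (neg_nonneg.2 hy0) hyx (by linarith)
      exact ⟨-σ₁, -σ₂, by rwa [abs_neg], by rwa [abs_neg], by linear_combination h⟩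
    · obtain ⟨σ₁, σ₂, h₁, h₂, h⟩ :=
        exists_rhombus_vertex_of_le hc0 hc1 (neg_nonneg.2 hx0) hxy (by linarith)
      exact ⟨-σ₂, -σ₁, by rwa [abs_neg], by rwa [abs_neg], by linear_combination h⟩

/-- For unit vectors `e₁, e₂` with `⟪e₁, e₂⟫ = c`, the quadratic form is
`‖(x - σ₁) • e₁ + (y - σ₂) • e₂‖ ^ 2`, the squared distance from a point of the rhombus with
vertices `±e₁ ± e₂` to a vertex; `2 / (1 + |c|)` is the squared circumradius of the triangle formed
by an acute vertex and the two obtuse ones. -/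
lemma exists_rhombus_vertex (hc : |c| ≤ 1) (hx : |x| ≤ 1) (hy : |y| ≤ 1) :
    ∃ σ₁ σ₂ : ℝ, |σ₁| = 1 ∧ |σ₂| = 1 ∧
      (1 + |c|) * ((x - σ₁) ^ 2 + (y - σ₂) ^ 2 + 2 * c * (x - σ₁) * (y - σ₂)) ≤ 2 := by
  rcases le_total 0 c with hc0 | hc0
  · rw [abs_of_nonneg hc0] at hc ⊢
    exact exists_rhombus_vertex_of_nonneg hc0 hc hx hy
  · rw [abs_of_nonpos hc0] at hc ⊢
    obtain ⟨σ₁, σ₂, h₁, h₂, h⟩ :=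
      exists_rhombus_vertex_of_nonneg (neg_nonneg.2 hc0) hc hx (by rwa [abs_neg] : |-y| ≤ 1)
    exact ⟨σ₁, -σ₂, h₁, by rwa [abs_neg], by linear_combination h⟩

end Rhombus

section Fract

variable {δ : ℝ}

lemma exists_eq_intCast_add_mul_of_fract_notMem {p : ℝ} (hδ : 0 < δ)
    (h : Int.fract p ∉ Icc δ (1 - δ)) : ∃ (n : ℤ) (x : ℝ), |x| ≤ 1 ∧ p = n + x * δ := by
  have hp : p = ⌊p⌋ + Int.fract p := (Int.floor_add_fract p).symm
  rw [mem_Icc, not_and_or, not_le, not_le] at h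
  rcases h with h | h
  · refine ⟨⌊p⌋, Int.fract p / δ, ?_, by rw [div_mul_cancel₀ _ hδ.ne']; exact hp⟩
    rw [abs_div, abs_of_pos hδ, div_le_one hδ, abs_of_nonneg (Int.fract_nonneg p)]
    exact h.le
  · refine ⟨⌊p⌋ + 1, (Int.fract p - 1) / δ, ?_, by
      rw [div_mul_cancel₀ _ hδ.ne']; push_cast; linarith⟩
    rw [abs_div, abs_of_pos hδ, div_le_one hδ, abs_of_nonpos (by linarith [Int.fract_lt_one p])]
    linarith

lemma fract_intCast_add_mul_mem_Icc (hδ : 0 < δ) (hδ' : δ ≤ 1 / 2) {σ : ℝ} (hσ : |σ| = 1)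
    (n : ℤ) : Int.fract (n + σ * δ) ∈ Icc δ (1 - δ) := by
  rw [Int.fract_intCast_add]
  rcases (abs_eq zero_le_one).1 hσ with rfl | rfl
  · rw [one_mul, Int.fract_eq_self.2 ⟨hδ.le, by linarith⟩]
    exact ⟨le_rfl, by linarith⟩
  · rw [Int.fract_eq_iff.2 ⟨(by linarith : (0 : ℝ) ≤ 1 - δ), by linarith, -1, by push_cast; ring⟩]
    exact ⟨by linarith, le_rfl⟩

end Fract

section InnerProductSpace

variable {E : Type*} [NormedAddCommGroup E] [InnerProductSpace ℝ E]

lemma norm_smul_add_smul_sq (a b : E) (u v : ℝ) :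
    ‖u • a + v • b‖ ^ 2 = u ^ 2 * ‖a‖ ^ 2 + v ^ 2 * ‖b‖ ^ 2 + 2 * u * v * ⟪a, b⟫_ℝ := by
  rw [norm_add_sq_real, norm_smul, norm_smul, real_inner_smul_left, real_inner_smul_right,
    Real.norm_eq_abs, Real.norm_eq_abs, mul_pow, mul_pow, sq_abs, sq_abs]
  ring

lemma norm_le_of_rhombus_bound {a b : E} (hab : ‖a‖ = ‖b‖) {ρ : ℝ} (hρ0 : 0 ≤ ρ)
    (hρ : 2 * ‖a‖ ^ 4 ≤ (‖a‖ ^ 2 + |⟪a, b⟫_ℝ|) * ρ ^ 2) : ‖a‖ ≤ ρ := by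
  have hab' : |⟪a, b⟫_ℝ| ≤ ‖a‖ ^ 2 := by simpa [← hab, sq] using abs_real_inner_le_norm a b
  have h : 2 * ‖a‖ ^ 4 ≤ 2 * ‖a‖ ^ 2 * ρ ^ 2 := by nlinarith [sq_nonneg ρ]
  by_contra! hlt
  have hρa : ρ ^ 2 < ‖a‖ ^ 2 := pow_lt_pow_left₀ hlt hρ0 two_ne_zero
  nlinarith [pow_pos (hρ0.trans_lt hlt) 2]

lemma exists_rhombus_vertex_norm_le {a b : E} (hab : ‖a‖ = ‖b‖) {ρ : ℝ} (hρ0 : 0 ≤ ρ)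
    (hρ : 2 * ‖a‖ ^ 4 ≤ (‖a‖ ^ 2 + |⟪a, b⟫_ℝ|) * ρ ^ 2) {x y : ℝ} (hx : |x| ≤ 1) (hy : |y| ≤ 1) :
    ∃ σ₁ σ₂ : ℝ, |σ₁| = 1 ∧ |σ₂| = 1 ∧ ‖(x - σ₁) • a + (y - σ₂) • b‖ ≤ ρ := by
  rcases eq_or_ne a 0 with rfl | ha
  · obtain rfl : b = 0 := norm_eq_zero.1 (by simp [← hab])
    exact ⟨1, 1, abs_one, abs_one, by simpa using hρ0⟩
  have hℓ : 0 < ‖a‖ ^ 2 := by positivity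
  set c := ⟪a, b⟫_ℝ / ‖a‖ ^ 2
  have hc : |c| ≤ 1 := by
    rw [abs_div, abs_of_pos hℓ, div_le_one hℓ, sq, hab]
    exact hab ▸ abs_real_inner_le_norm a b
  have hinner : ⟪a, b⟫_ℝ = c * ‖a‖ ^ 2 := (div_mul_cancel₀ _ hℓ.ne').symm
  obtain ⟨σ₁, σ₂, h₁, h₂, hσ⟩ := exists_rhombus_vertex hc hx hy
  refine ⟨σ₁, σ₂, h₁, h₂, (pow_le_pow_iff_left₀ (norm_nonneg _) hρ0 two_ne_zero).1 ?_⟩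
  have hpos : 0 < ‖a‖ ^ 2 + |⟪a, b⟫_ℝ| := by positivity
  refine le_of_mul_le_mul_left ?_ hpos
  calc (‖a‖ ^ 2 + |⟪a, b⟫_ℝ|) * ‖(x - σ₁) • a + (y - σ₂) • b‖ ^ 2
      = (1 + |c|) * ((x - σ₁) ^ 2 + (y - σ₂) ^ 2 + 2 * c * (x - σ₁) * (y - σ₂)) * ‖a‖ ^ 4 := by
        rw [norm_smul_add_smul_sq, ← hab, hinner, abs_mul, abs_of_pos hℓ]; ring
    _ ≤ 2 * ‖a‖ ^ 4 := by gcongr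
    _ ≤ (‖a‖ ^ 2 + |⟪a, b⟫_ℝ|) * ρ ^ 2 := hρ

lemma exists_sign_norm_sub_smul_le (a : E) {x : ℝ} (hx : |x| ≤ 1) :
    ∃ σ : ℝ, |σ| = 1 ∧ ‖(x - σ) • a‖ ≤ ‖a‖ := by
  rw [abs_le] at hx
  rcases le_total 0 x with h | h
  · refine ⟨1, abs_one, ?_⟩
    rw [norm_smul, Real.norm_eq_abs, abs_of_nonpos (by linarith)]
    exact mul_le_of_le_one_left (norm_nonneg a) (by linarith)
  · refine ⟨-1, by simp, ?_⟩
    rw [norm_smul, Real.norm_eq_abs, abs_of_nonneg (by linarith)]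
    exact mul_le_of_le_one_left (norm_nonneg a) (by linarith)

theorem exists_fract_mem_Icc_norm_le {η₁ η₂ : E} {δ₁ δ₂ ρ : ℝ} (hδ₁ : 0 < δ₁) (hδ₁' : δ₁ ≤ 1 / 2)
    (hδ₂ : 0 < δ₂) (hδ₂' : δ₂ ≤ 1 / 2) (hℓ : ‖δ₁ • η₁‖ = ‖δ₂ • η₂‖) (hρ0 : 0 ≤ ρ)
    (hρ : 2 * ‖δ₁ • η₁‖ ^ 4 ≤ (‖δ₁ • η₁‖ ^ 2 + |⟪δ₁ • η₁, δ₂ • η₂⟫_ℝ|) * ρ ^ 2) (p q : ℝ) :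
    ∃ p' q' : ℝ, Int.fract p' ∈ Icc δ₁ (1 - δ₁) ∧ Int.fract q' ∈ Icc δ₂ (1 - δ₂) ∧
      ‖(p - p') • η₁ + (q - q') • η₂‖ ≤ ρ := by
  have hℓρ := norm_le_of_rhombus_bound hℓ hρ0 hρ
  have shift (n : ℤ) (x σ δ : ℝ) (η : E) : (n + x * δ - (n + σ * δ)) • η = (x - σ) • δ • η := by
    rw [smul_smul]; congr 1; ring
  by_cases hp : Int.fract p ∈ Icc δ₁ (1 - δ₁) <;> by_cases hq : Int.fract q ∈ Icc δ₂ (1 - δ₂)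
  · exact ⟨p, q, hp, hq, by simpa using hρ0⟩
  · obtain ⟨n, y, hy, rfl⟩ := exists_eq_intCast_add_mul_of_fract_notMem hδ₂ hq
    obtain ⟨σ, hσ, h⟩ := exists_sign_norm_sub_smul_le (δ₂ • η₂) hy
    refine ⟨p, n + σ * δ₂, hp, fract_intCast_add_mul_mem_Icc hδ₂ hδ₂' hσ n, ?_⟩
    rw [sub_self, zero_smul, zero_add, shift]
    exact h.trans (hℓ ▸ hℓρ)
  · obtain ⟨n, x, hx, rfl⟩ := exists_eq_intCast_add_mul_of_fract_notMem hδ₁ hp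
    obtain ⟨σ, hσ, h⟩ := exists_sign_norm_sub_smul_le (δ₁ • η₁) hx
    refine ⟨n + σ * δ₁, q, fract_intCast_add_mul_mem_Icc hδ₁ hδ₁' hσ n, hq, ?_⟩
    rw [sub_self, zero_smul, add_zero, shift]
    exact h.trans hℓρ
  · obtain ⟨n₁, x, hx, rfl⟩ := exists_eq_intCast_add_mul_of_fract_notMem hδ₁ hp
    obtain ⟨n₂, y, hy, rfl⟩ := exists_eq_intCast_add_mul_of_fract_notMem hδ₂ hq
    obtain ⟨σ₁, σ₂, hσ₁, hσ₂, h⟩ := exists_rhombus_vertex_norm_le hℓ hρ0 hρ hx hy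
    refine ⟨n₁ + σ₁ * δ₁, n₂ + σ₂ * δ₂, fract_intCast_add_mul_mem_Icc hδ₁ hδ₁' hσ₁ n₁,
      fract_intCast_add_mul_mem_Icc hδ₂ hδ₂' hσ₂ n₂, ?_⟩
    rwa [shift, shift]

end InnerProductSpace

namespace Complex

/-- The coefficient of `η` when `w` is written in the `ℝ`-basis `(η, η')` (Cramer's rule). -/
def latCoord (η η' w : ℂ) : ℝ := (w * conj η').im / (η * conj η').im

lemma im_mul_conj_comm (η η' : ℂ) : (η' * conj η).im = -(η * conj η').im := by
  simp only [mul_im, conj_re, conj_im]; ring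

lemma latCoord_mul_add_mul {η η' : ℂ} (h : (η * conj η').im ≠ 0) (u v : ℝ) :
    latCoord η η' (u * η + v * η') = u := by
  rw [latCoord, add_mul, mul_assoc, mul_assoc, mul_conj, add_im, im_ofReal_mul, im_ofReal_mul,
    ofReal_im, mul_zero, add_zero, mul_div_cancel_right₀ _ h]

lemma im_mul_conj_mul_sub_im_mul_conj_mul (w η₁ η₂ : ℂ) :
    ((w * conj η₂).im : ℂ) * η₁ - (w * conj η₁).im * η₂ = (η₁ * conj η₂).im * w := by
  apply Complex.ext <;> simp <;> ring

lemma latCoord_mul_add_latCoord_mul {η₁ η₂ : ℂ} (h : (η₁ * conj η₂).im ≠ 0) (w : ℂ) :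
    latCoord η₁ η₂ w * η₁ + latCoord η₂ η₁ w * η₂ = w := by
  have key := im_mul_conj_mul_sub_im_mul_conj_mul w η₁ η₂
  rw [latCoord, latCoord, im_mul_conj_comm η₁ η₂]
  generalize (η₁ * conj η₂).im = K at h key ⊢
  generalize (w * conj η₂).im = a at key ⊢
  generalize (w * conj η₁).im = b at key ⊢
  have hK : (K : ℂ) ≠ 0 := ofReal_ne_zero.2 h
  push_cast
  field_simp
  linear_combination key

lemma abs_latCoord_mul_le (η η' w : ℂ) :
    |latCoord η η' w| * |(η * conj η').im| ≤ ‖w‖ * ‖η'‖ := by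
  rcases eq_or_ne (η * conj η').im 0 with h | h
  · simp [h]; positivity
  rw [latCoord, abs_div, div_mul_cancel₀ _ (abs_ne_zero.2 h), ← norm_conj η', ← norm_mul]
  exact abs_im_le_norm _

lemma im_mul_conj_ne_zero_of_div {η₁ η₂ : ℂ} (hη : (η₁ / η₂).im ≠ 0) :
    (η₁ * conj η₂).im ≠ 0 := by
  rw [div_eq_mul_inv, inv_def, ← mul_assoc, im_mul_ofReal] at hη
  exact left_ne_zero_of_mul hη

lemma abs_im_mul_conj_eq {η₁ η₂ : ℂ} {θ : ℝ} (hs : 0 ≤ Real.sin θ)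
    (hcos : Real.cos θ = (η₁ * conj η₂).re / (‖η₁‖ * ‖η₂‖)) :
    |(η₁ * conj η₂).im| = ‖η₁‖ * ‖η₂‖ * Real.sin θ := by
  set ω := η₁ * conj η₂
  have hn : ‖ω‖ = ‖η₁‖ * ‖η₂‖ := by rw [norm_mul, norm_conj]
  have hre : ω.re = Real.cos θ * ‖ω‖ := by
    rw [hcos, hn, div_mul_cancel_of_imp]
    intro h0
    rw [← hn, norm_eq_zero] at h0
    rw [h0, zero_re]
  rw [← hn, ← abs_of_nonneg (by positivity : 0 ≤ ‖ω‖ * Real.sin θ), ← sq_eq_sq_iff_abs_eq_abs]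
  linear_combination -sq_norm_sub_sq_re ω - (ω.re + Real.cos θ * ‖ω‖) * hre
    - ‖ω‖ ^ 2 * Real.sin_sq_add_cos_sq θ

end Complex

open Complex

lemma mem_innerPart_of_ball_subset {A : Set ℂ} {x : ℂ} {t : ℝ} (hA : A ≠ univ) (hx : x ∈ A)
    (h : Metric.ball x t ⊆ A) : x ∈ innerPart t A := by
  refine ⟨hx, (Metric.le_infDist (nonempty_frontier_iff.2 ⟨⟨x, hx⟩, hA⟩)).2 fun y hy => ?_⟩
  by_contra! hlt
  exact hy.2 (interior_maximal h Metric.isOpen_ball (Metric.mem_ball'.2 hlt))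

lemma fund_ne_univ (ξ : ℂ) {η₁ η₂ : ℂ} (h : (η₁ * conj η₂).im ≠ 0) : fund ξ η₁ η₂ ≠ univ := by
  intro hu
  obtain ⟨x, y, hx, -, hxy⟩ : ξ - η₁ ∈ fund ξ η₁ η₂ := hu ▸ mem_univ _
  have h0 : ((x + 1 : ℝ) : ℂ) * η₁ + (y : ℂ) * η₂ = 0 := by push_cast; linear_combination -hxy
  have := congrArg (latCoord η₁ η₂) h0
  rw [latCoord_mul_add_mul h] at this
  simp only [latCoord, zero_mul, zero_im, zero_div] at this
  linarith [hx.1]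

lemma ball_subset_fund {ξ η₁ η₂ : ℂ} (h : (η₁ * conj η₂).im ≠ 0) {t δ₁ δ₂ x y : ℝ}
    (h₁ : t * ‖η₂‖ ≤ δ₁ * |(η₁ * conj η₂).im|) (h₂ : t * ‖η₁‖ ≤ δ₂ * |(η₁ * conj η₂).im|)
    (hx : x ∈ Icc δ₁ (1 - δ₁)) (hy : y ∈ Icc δ₂ (1 - δ₂)) :
    Metric.ball (ξ + x * η₁ + y * η₂) t ⊆ fund ξ η₁ η₂ := by
  intro q hq
  set w := q - (ξ + x * η₁ + y * η₂) with hw_def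
  have hw : ‖w‖ < t := mem_ball_iff_norm.1 hq
  have hK : 0 < |(η₁ * conj η₂).im| := abs_pos.2 h
  have hη₁ : 0 < ‖η₁‖ := norm_pos_iff.2 (by rintro rfl; simp at h)
  have hη₂ : 0 < ‖η₂‖ := norm_pos_iff.2 (by rintro rfl; simp at h)
  have hu : |latCoord η₁ η₂ w| < δ₁ := lt_of_mul_lt_mul_right
    ((abs_latCoord_mul_le η₁ η₂ w).trans_lt ((mul_lt_mul_of_pos_right hw hη₂).trans_le h₁)) hK.le
  have hv : |latCoord η₂ η₁ w| < δ₂ := by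
    have := abs_latCoord_mul_le η₂ η₁ w
    rw [im_mul_conj_comm, abs_neg] at this
    exact lt_of_mul_lt_mul_right (this.trans_lt ((mul_lt_mul_of_pos_right hw hη₁).trans_le h₂))
      hK.le
  rw [abs_lt] at hu hv
  refine ⟨x + latCoord η₁ η₂ w, y + latCoord η₂ η₁ w, ⟨by linarith [hx.1], by linarith [hx.2]⟩,
    ⟨by linarith [hy.1], by linarith [hy.2]⟩, ?_⟩
  push_cast
  linear_combination hw_def - latCoord_mul_add_latCoord_mul h w

lemma mem_innerPart_fund {ξ η₁ η₂ : ℂ} (h : (η₁ * conj η₂).im ≠ 0) {t δ₁ δ₂ x y : ℝ}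
    (hδ₁ : 0 < δ₁) (hδ₂ : 0 < δ₂)
    (h₁ : t * ‖η₂‖ ≤ δ₁ * |(η₁ * conj η₂).im|) (h₂ : t * ‖η₁‖ ≤ δ₂ * |(η₁ * conj η₂).im|)
    (hx : x ∈ Icc δ₁ (1 - δ₁)) (hy : y ∈ Icc δ₂ (1 - δ₂)) :
    ξ + x * η₁ + y * η₂ ∈ innerPart t (fund ξ η₁ η₂) :=
  mem_innerPart_of_ball_subset (fund_ne_univ ξ h)
    ⟨x, y, ⟨hδ₁.le.trans hx.1, by linarith [hx.2]⟩, ⟨hδ₂.le.trans hy.1, by linarith [hy.2]⟩, rfl⟩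
    (ball_subset_fund h h₁ h₂ hx hy)

lemma nu2_sub_one_mul_sq {θ : ℝ} (hs : Real.sin θ ≠ 0) (t : ℝ) :
    ((nu2 θ - 1) * t) ^ 2 * (1 + |Real.cos θ|) = 2 * (t / Real.sin θ) ^ 2 := by
  have hc : 0 < 1 + |Real.cos θ| := by positivity
  rw [nu2, add_sub_cancel_left, mul_pow, div_pow, mul_pow, Real.sq_sqrt zero_le_two,
    Real.sq_sqrt hc.le]
  field_simp

lemma IsCovering.trans {r s : ℝ} {A B C : Set ℂ} (hB : IsCovering r B A) (hC : IsCovering s C B) :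
    IsCovering (r + s) C A := by
  intro x hx
  obtain ⟨y, hy, hxy⟩ := hB x hx
  obtain ⟨z, hz, hyz⟩ := hC y hy
  exact ⟨z, hz, (dist_triangle x y z).trans (add_le_add hxy hyz)⟩

theorem isCovering_innerPart_add_lat_of_rhombus {ξ η₁ η₂ : ℂ} (h : (η₁ * conj η₂).im ≠ 0)
    {t δ₁ δ₂ ρ : ℝ} (hδ₁ : 0 < δ₁) (hδ₁' : δ₁ ≤ 1 / 2) (hδ₂ : 0 < δ₂) (hδ₂' : δ₂ ≤ 1 / 2)
    (h₁ : t * ‖η₂‖ ≤ δ₁ * |(η₁ * conj η₂).im|) (h₂ : t * ‖η₁‖ ≤ δ₂ * |(η₁ * conj η₂).im|)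
    (hℓ : ‖δ₁ • η₁‖ = ‖δ₂ • η₂‖) (hρ0 : 0 ≤ ρ)
    (hρ : 2 * ‖δ₁ • η₁‖ ^ 4 ≤ (‖δ₁ • η₁‖ ^ 2 + |⟪δ₁ • η₁, δ₂ • η₂⟫_ℝ|) * ρ ^ 2) :
    IsCovering ρ (image2 (· + ·) (innerPart t (fund ξ η₁ η₂)) (lat η₁ η₂)) univ := by
  intro z _
  obtain ⟨p', q', hp', hq', hdist⟩ := exists_fract_mem_Icc_norm_le hδ₁ hδ₁' hδ₂ hδ₂' hℓ hρ0 hρ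
    (latCoord η₁ η₂ (z - ξ)) (latCoord η₂ η₁ (z - ξ))
  refine ⟨_, ⟨_, mem_innerPart_fund h hδ₁ hδ₂ h₁ h₂ hp' hq', _, ⟨⌊p'⌋, ⌊q'⌋, rfl⟩, rfl⟩, ?_⟩
  have hz : z - (ξ + Int.fract p' * η₁ + Int.fract q' * η₂ + (⌊p'⌋ * η₁ + ⌊q'⌋ * η₂))
      = (latCoord η₁ η₂ (z - ξ) - p') • η₁ + (latCoord η₂ η₁ (z - ξ) - q') • η₂ := by
    simp only [Complex.real_smul, Int.fract]
    push_cast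
    linear_combination -latCoord_mul_add_latCoord_mul h (z - ξ)
  dsimp only
  rwa [dist_eq_norm, hz]

theorem isCovering_innerPart_add_lat {ξ η₁ η₂ : ℂ} (hη : (η₁ / η₂).im ≠ 0) {θ : ℝ}
    (hθ : θ ∈ Ioo 0 Real.pi) (hcos : Real.cos θ = (η₁ * conj η₂).re / (‖η₁‖ * ‖η₂‖)) {t : ℝ}
    (ht : 0 < t) (ht2 : t < width θ η₁ η₂ / 2) :
    IsCovering ((nu2 θ - 1) * t)
      (image2 (· + ·) (innerPart t (fund ξ η₁ η₂)) (lat η₁ η₂)) univ := by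
  have h := im_mul_conj_ne_zero_of_div hη
  have hη₁ : 0 < ‖η₁‖ := norm_pos_iff.2 (by rintro rfl; simp at h)
  have hη₂ : 0 < ‖η₂‖ := norm_pos_iff.2 (by rintro rfl; simp at h)
  have hs : 0 < Real.sin θ := Real.sin_pos_of_pos_of_lt_pi hθ.1 hθ.2
  have hK := abs_im_mul_conj_eq hs.le hcos
  have hw := ht2
  rw [width] at hw
  have hw₁ := mul_le_mul_of_nonneg_right (min_le_left ‖η₁‖ ‖η₂‖) hs.le
  have hw₂ := mul_le_mul_of_nonneg_right (min_le_right ‖η₁‖ ‖η₂‖) hs.le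
  have hℓ₁ : ‖(t / (‖η₁‖ * Real.sin θ)) • η₁‖ = t / Real.sin θ := by
    rw [norm_smul, Real.norm_eq_abs, abs_of_pos (by positivity)]; field_simp
  have hℓ₂ : ‖(t / (‖η₂‖ * Real.sin θ)) • η₂‖ = t / Real.sin θ := by
    rw [norm_smul, Real.norm_eq_abs, abs_of_pos (by positivity)]; field_simp
  have hinner : ⟪(t / (‖η₁‖ * Real.sin θ)) • η₁, (t / (‖η₂‖ * Real.sin θ)) • η₂⟫_ℝ
      = (t / Real.sin θ) ^ 2 * Real.cos θ := by
    rw [real_inner_smul_left, real_inner_smul_right, Complex.inner, hcos, ← conj_re,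
      map_mul, conj_conj, mul_comm (conj η₂)]
    field_simp
  refine isCovering_innerPart_add_lat_of_rhombus h (by positivity)
    ((div_le_iff₀ (by positivity)).2 (by linarith)) (by positivity)
    ((div_le_iff₀ (by positivity)).2 (by linarith)) (le_of_eq (by rw [hK]; field_simp))
    (le_of_eq (by rw [hK]; field_simp)) (hℓ₁.trans hℓ₂.symm)
    (by rw [nu2, add_sub_cancel_left]; positivity) ?_
  rw [hℓ₁, hinner, abs_mul, abs_of_nonneg (sq_nonneg _)]
  linear_combination -(t / Real.sin θ) ^ 2 * nu2_sub_one_mul_sq hs.ne' t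

/-- If 0 < t < w(X)/2 and S + L is a t-covering of B₋ₜ(X) + L, then
S + L is a (ν₂(θ)·t)-covering of all of ℂ. -/
theorem statement9
    (ξ η₁ η₂ : ℂ) (hη : (η₁ / η₂).im ≠ 0)
    (θ : ℝ) (hθ : θ ∈ Set.Ioo 0 Real.pi)
    (hcos : Real.cos θ = (η₁ * (starRingEnd ℂ) η₂).re / (‖η₁‖ * ‖η₂‖))
    (t : ℝ) (ht : 0 < t) (ht2 : t < width θ η₁ η₂ / 2)
    (S : Set ℂ)
    (hS : IsCovering t (Set.image2 (· + ·) S (lat η₁ η₂))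
      (Set.image2 (· + ·) (innerPart t (fund ξ η₁ η₂)) (lat η₁ η₂))) :
    IsCovering (nu2 θ * t) (Set.image2 (· + ·) S (lat η₁ η₂)) Set.univ := by
  have h := (isCovering_innerPart_add_lat hη hθ hcos ht ht2).trans hS
  rwa [sub_one_mul, sub_add_cancel] at h
end
end

section
/- If β·w(X) > 2·r(L), then the set ({ξ} ∪ T^{−1}(ξ)) + L is a (ν₁(θ)·r(L)/β)-covering of all of ℂ, where T^{−1}(ξ) = (βζ)^{−1}·((ξ + L) ∩ βζX). -/
open MeasureTheory Set Filter

noncomputable section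

set_option maxHeartbeats 2000000


private lemma sq_le_sq_imp (a b : ℝ) (ha : 0 ≤ a) (hb : 0 ≤ b) (h : a^2 ≤ b^2) : a ≤ b := by
  nlinarith

lemma nu_ge_two (c s ν : ℝ) (hs : 0 < s) (hcs : s^2 + c^2 = 1)
    (hν : (|c| < 3/5 ∧ ν = 2) ∨ (3/5 ≤ |c| ∧ 0 < s + |c| - 1 ∧ 2*ν*(s+|c|-1) = 1+|c|)) :
    2 ≤ ν := by
  rcases hν with ⟨_, h⟩ | ⟨hk35, hden, heq⟩
  · linarith
  · have hk0 : 0 ≤ |c| := abs_nonneg c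
    have hk2 : |c|^2 = c^2 := sq_abs c
    have hk1 : |c| ≤ 1 := by nlinarith
    have h4s : 4*s ≤ 5 - 3*|c| := by
      have h1 : (4*s)^2 ≤ (5-3*|c|)^2 := by nlinarith [sq_nonneg (5*|c| - 3)]
      exact sq_le_sq_imp _ _ (by linarith) (by linarith) h1
    nlinarith [mul_pos hden hden]

private lemma stepB (s ν δ₁ x : ℝ) (hs : 0 ≤ s) (hδ : 0 ≤ δ₁) (hx0 : 0 ≤ x) (hx1 : x ≤ 1)
    (hν : 0 ≤ ν) (hid : 1 + δ₁^2 = 2*ν*δ₁) :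
    (s*(ν - δ₁*x))^2 ≤ s^2*(ν^2 - x^2) := by
  have key : (s*(ν - δ₁*x))^2 = s^2*(ν^2-x^2) - (2*ν*δ₁)*(s^2*(x*(1-x))) := by
    linear_combination (s^2*x^2)*hid
  have hpos : 0 ≤ (2*ν*δ₁)*(s^2*(x*(1-x))) :=
    mul_nonneg (by positivity) (mul_nonneg (sq_nonneg s) (mul_nonneg hx0 (by linarith)))
  linarith

private lemma stepFin (s ν δ u τ : ℝ) (hτ : τ = s*((ν-1) - δ*u)) (hδ : 0 ≤ δ)
    (hu0 : 0 ≤ u) (hu1 : u ≤ 1) (hν : 1 ≤ ν) (hid : 1 + δ^2 = 2*(ν-1)*δ) :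
    τ^2 + s^2*u^2 ≤ ((ν-1)*s)^2 := by
  have key : τ^2 + s^2*u^2 - ((ν-1)*s)^2 = -((2*(ν-1)*δ))*(s^2*(u*(1-u))) := by
    rw [hτ]; linear_combination (s^2*u^2)*hid
  have hpos : 0 ≤ (2*(ν-1)*δ)*(s^2*(u*(1-u))) :=
    mul_nonneg (mul_nonneg (by linarith) hδ)
      (mul_nonneg (sq_nonneg s) (mul_nonneg hu0 (by linarith)))
  linarith

lemma core_ineq (c s ν g₁ g₂ : ℝ) (hs : 0 < s) (hcs : s^2 + c^2 = 1)
    (hν : (|c| < 3/5 ∧ ν = 2) ∨ (3/5 ≤ |c| ∧ 0 < s + |c| - 1 ∧ 2*ν*(s+|c|-1) = 1+|c|))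
    (hg10 : 0 ≤ g₁) (hg11 : g₁ ≤ 1) (hg20 : 0 ≤ g₂) (hg2 : g₂ ≤ 1 + max c 0 * (1-g₁)) :
    g₁^2 + 2*c*g₁*g₂ + g₂^2 ≤ (ν*s)^2 ∨
      (1-g₁)^2 + 2*c*(1-g₁)*(1-g₂) + (1-g₂)^2 ≤ ((ν-1)*s)^2 := by
  have hν2 : 2 ≤ ν := nu_ge_two c s ν hs hcs hν
  have hs1 : s ≤ 1 := by nlinarith [sq_nonneg c]
  by_cases hcase : 0 ≤ c
  · -- acute
    have hkc : |c| = c := abs_of_nonneg hcase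
    have hc1 : c < 1 := by nlinarith [sq_nonneg s]
    obtain ⟨w, hw0, hw2⟩ : ∃ w : ℝ, 0 ≤ w ∧ w^2 = (ν-1)^2 - 1 :=
      ⟨Real.sqrt ((ν-1)^2 - 1), Real.sqrt_nonneg _, Real.sq_sqrt (by nlinarith)⟩
    obtain ⟨w₁, hw10, hw12⟩ : ∃ w₁ : ℝ, 0 ≤ w₁ ∧ w₁^2 = ν^2 - 1 :=
      ⟨Real.sqrt (ν^2 - 1), Real.sqrt_nonneg _, Real.sq_sqrt (by nlinarith)⟩
    have hwd : w ≤ ν - 1 := sq_le_sq_imp _ _ hw0 (by linarith) (by nlinarith)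
    have hw1d : w₁ ≤ ν := sq_le_sq_imp _ _ hw10 (by linarith) (by nlinarith)
    have hww1 : 1 + w ≤ w₁ := sq_le_sq_imp _ _ (by linarith) hw10 (by nlinarith)
    have hKEY : 1 + c ≤ s*ν + s*w := by
      rcases hν with ⟨hk35, hνe⟩ | ⟨hk35, hden, heq⟩
      · have hc35 : c < 3/5 := by rwa [hkc] at hk35
        have h2s : 1 + c ≤ 2*s := by
          refine sq_le_sq_imp _ _ (by linarith) (by linarith) ?_
          nlinarith [mul_nonneg hcase (by linarith : (0:ℝ) ≤ 3 - 5*c)]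
        have : 0 ≤ s*w := mul_nonneg hs.le hw0
        rw [hνe]; linarith
      · rw [hkc] at heq hden
        by_cases hle : 1 + c ≤ s*ν
        · have : 0 ≤ s*w := mul_nonneg hs.le hw0
          linarith
        · push_neg at hle
          have habs : (s*w)^2 = (1 + c - s*ν)^2 := by
            linear_combination (s^2)*hw2 - 2*ν*hcs + (1+c)*heq
          have := sq_le_sq_imp (1+c-s*ν) (s*w) (by linarith) (mul_nonneg hs.le hw0) (by linarith)
          linarith
    by_cases hF1 : g₁^2 + 2*c*g₁*g₂ + g₂^2 ≤ (ν*s)^2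
    · exact Or.inl hF1
    · right
      push_neg at hF1
      have hmax : max c 0 = c := max_eq_left hcase
      rw [hmax] at hg2
      obtain ⟨u, hu⟩ : ∃ x:ℝ, x = 1 - g₁ := ⟨_, rfl⟩
      obtain ⟨t, ht⟩ : ∃ x:ℝ, x = 1 + c*u - g₂ := ⟨_, rfl⟩
      have hu0 : 0 ≤ u := by rw [hu]; linarith
      have hu1 : u ≤ 1 := by rw [hu]; linarith
      have hcu : c*u ≤ c := mul_le_of_le_one_right hcase hu1
      have ht0 : 0 ≤ t := by rw [ht, hu]; linarith [hg2]
      have ht1 : t ≤ 1 + c*u := by rw [ht]; linarith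
      have htc : t ≤ 1 + c := by linarith
      have hHid : g₁^2 + 2*c*g₁*g₂ + g₂^2 = (1+c-t)^2 + s^2*(1-u)^2 := by
        rw [ht, hu]; linear_combination (-(g₁^2))*hcs
      have hH : (ν*s)^2 < (1+c-t)^2 + s^2*(1-u)^2 := by rw [← hHid]; exact hF1
      have hid1 : 1 + (ν-1-w)^2 = 2*(ν-1)*(ν-1-w) := by linear_combination hw2
      have hid2 : 1 + (ν-w₁)^2 = 2*ν*(ν-w₁) := by linear_combination hw12
      obtain ⟨τ, hτ⟩ : ∃ x:ℝ, x = s*((ν-1) - (ν-1-w)*u) := ⟨_, rfl⟩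
      have hA : 1 + c ≤ τ + s*(ν - (ν-w₁)*(1-u)) := by
        have hprod : 0 ≤ s*((1-u)*(w₁-(1+w))) :=
          mul_nonneg hs.le (mul_nonneg (by linarith) (by linarith))
        have hexp : τ + s*(ν - (ν-w₁)*(1-u)) = (s*ν + s*w) + s*((1-u)*(w₁-(1+w))) := by
          rw [hτ]; ring
        linarith
      have hBpos : 0 ≤ ν - (ν-w₁)*(1-u) := by
        have h1 : (ν-w₁)*(1-u) ≤ ν-w₁ := mul_le_of_le_one_right (by linarith) (by linarith)
        linarith
      have hB : (s*(ν - (ν-w₁)*(1-u)))^2 ≤ s^2*(ν^2 - (1-u)^2) :=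
        stepB s ν (ν-w₁) (1-u) hs.le (by linarith) (by linarith) (by linarith)
          (by linarith) hid2
      have hτt : t ≤ τ := by
        by_cases hcτ : 1 + c ≤ τ
        · linarith
        · push_neg at hcτ
          have h2 : s*(ν - (ν-w₁)*(1-u)) ≤ 1 + c - t := by
            refine sq_le_sq_imp _ _ (mul_nonneg hs.le hBpos) (by linarith) ?_
            calc (s*(ν - (ν-w₁)*(1-u)))^2 ≤ s^2*(ν^2 - (1-u)^2) := hB
              _ ≤ (1+c-t)^2 := by nlinarith [hH]
          linarith
      have hτ0 : 0 ≤ τ := le_trans ht0 hτt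
      have goal_eq : (1-g₁)^2 + 2*c*(1-g₁)*(1-g₂) + (1-g₂)^2 = t^2 + s^2*u^2 := by
        rw [ht, hu]; linear_combination (-(1-g₁)^2)*hcs
      rw [goal_eq]
      have hfin : τ^2 + s^2*u^2 ≤ ((ν-1)*s)^2 :=
        stepFin s ν (ν-1-w) u τ hτ (by linarith) hu0 hu1 (by linarith) hid1
      have ht2 : t^2 ≤ τ^2 := pow_le_pow_left₀ ht0 hτt 2
      linarith
  · -- obtuse
    left
    push_neg at hcase
    have hkc : |c| = -c := abs_of_neg hcase
    have hmax : max c 0 = 0 := max_eq_right hcase.le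
    rw [hmax] at hg2
    have hg21 : g₂ ≤ 1 := by linarith
    rcases hν with ⟨hk35, hνe⟩ | ⟨hk35, hden, heq⟩
    · have hc2 : c^2 < 9/25 := by nlinarith [sq_abs c, abs_nonneg c]
      have : 2*c*g₁*g₂ ≤ 0 := by nlinarith [mul_nonneg hg10 hg20]
      rw [hνe]; nlinarith
    · rw [hkc] at heq hden hk35
      have hk1 : -c ≤ 1 := by nlinarith [sq_nonneg s]
      have hF1le1 : g₁^2 + 2*c*g₁*g₂ + g₂^2 ≤ 1 := by
        nlinarith [mul_nonneg (by linarith : (0:ℝ) ≤ 1-g₁) (by linarith : (0:ℝ) ≤ 1-g₂),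
          mul_nonneg hg10 (by linarith : (0:ℝ) ≤ 1-g₁),
          mul_nonneg hg20 (by linarith : (0:ℝ) ≤ 1-g₂),
          mul_nonneg (by linarith : (0:ℝ) ≤ -2*c-1) (mul_nonneg hg10 hg20)]
      have hνs : 1 ≤ ν*s := by
        nlinarith [mul_nonneg (by linarith : (0:ℝ) ≤ 2-s) (by linarith : (0:ℝ) ≤ 1+c)]
      nlinarith

private lemma core_scaled (c s ν ρ d₁ d₂ : ℝ) (hs : 0 < s) (hcs : s^2 + c^2 = 1)
    (hν : (|c| < 3/5 ∧ ν = 2) ∨ (3/5 ≤ |c| ∧ 0 < s + |c| - 1 ∧ 2*ν*(s+|c|-1) = 1+|c|))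
    (hρ : 0 < ρ) (h10 : 0 ≤ d₁) (h11 : d₁ ≤ ρ) (h20 : 0 ≤ d₂)
    (h2 : d₂ ≤ ρ + max c 0 * (ρ - d₁)) :
    d₁^2 + 2*c*d₁*d₂ + d₂^2 ≤ (ν*ρ*s)^2 ∨
      (ρ-d₁)^2 + 2*c*(ρ-d₁)*(ρ-d₂) + (ρ-d₂)^2 ≤ ((ν-1)*ρ*s)^2 := by
  have hρ' : ρ ≠ 0 := ne_of_gt hρ
  have hg2 : d₂/ρ ≤ 1 + max c 0 * (1 - d₁/ρ) := by
    rw [div_le_iff₀ hρ]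
    have : (1 + max c 0 * (1 - d₁/ρ))*ρ = ρ + max c 0 * (ρ - d₁) := by
      field_simp
    rw [this]; exact h2
  rcases core_ineq c s ν (d₁/ρ) (d₂/ρ) hs hcs hν (by positivity)
      ((div_le_one hρ).2 h11) (by positivity) hg2 with h | h
  · left
    have e1 : d₁^2 + 2*c*d₁*d₂ + d₂^2 = ((d₁/ρ)^2 + 2*c*(d₁/ρ)*(d₂/ρ) + (d₂/ρ)^2)*ρ^2 := by
      field_simp
    have e2 : (ν*ρ*s)^2 = (ν*s)^2*ρ^2 := by ring
    rw [e1, e2]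
    exact mul_le_mul_of_nonneg_right h (sq_nonneg ρ)
  · right
    have e1 : (ρ-d₁)^2 + 2*c*(ρ-d₁)*(ρ-d₂) + (ρ-d₂)^2 =
        ((1-d₁/ρ)^2 + 2*c*(1-d₁/ρ)*(1-d₂/ρ) + (1-d₂/ρ)^2)*ρ^2 := by
      field_simp
    have e2 : ((ν-1)*ρ*s)^2 = ((ν-1)*s)^2*ρ^2 := by ring
    rw [e1, e2]
    exact mul_le_mul_of_nonneg_right h (sq_nonneg ρ)

private lemma onecase (c s ν ρ h₁ h₂ u v : ℝ)
    (hs : 0 < s) (hcs : s^2 + c^2 = 1)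
    (hν : (|c| < 3/5 ∧ ν = 2) ∨ (3/5 ≤ |c| ∧ 0 < s + |c| - 1 ∧ 2*ν*(s+|c|-1) = 1+|c|))
    (hρ : 0 < ρ) (hh₁ : 0 < h₁) (hh₂ : 0 < h₂) (h2ρ1 : 2*ρ < h₁) (h2ρ2 : 2*ρ < h₂)
    (hu0 : 0 ≤ u) (huh : u*h₁ ≤ ρ) (hv0 : 0 ≤ v) (hv1 : v ≤ 1) :
    (∃ cv : ℝ, (cv = 0 ∨ cv = 1) ∧
      (h₁*u)^2 + 2*c*h₁*h₂*u*(v-cv) + (h₂*(v-cv))^2 ≤ (ν*ρ*s)^2) ∨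
    (∃ qu qv : ℝ, ρ ≤ qu*h₁ ∧ qu*h₁ ≤ h₁-ρ ∧ ρ ≤ qv*h₂ ∧ qv*h₂ ≤ h₂-ρ ∧
      (h₁*(u-qu))^2 + 2*c*h₁*h₂*(u-qu)*(v-qv) + (h₂*(v-qv))^2 ≤ ((ν-1)*ρ*s)^2) := by
  have hν2 : 2 ≤ ν := nu_ge_two c s ν hs hcs hν
  have hd10 : 0 ≤ u*h₁ := mul_nonneg hu0 hh₁.le
  by_cases hc1 : v*h₂ ≤ ρ + max c 0 * (ρ - u*h₁)
  · -- corner (0,0)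
    rcases core_scaled c s ν ρ (u*h₁) (v*h₂) hs hcs hν hρ hd10 huh
        (mul_nonneg hv0 hh₂.le) hc1 with h | h
    · left
      refine ⟨0, Or.inl rfl, ?_⟩
      calc (h₁*u)^2 + 2*c*h₁*h₂*u*(v-0) + (h₂*(v-0))^2
          = (u*h₁)^2 + 2*c*(u*h₁)*(v*h₂) + (v*h₂)^2 := by ring
        _ ≤ (ν*ρ*s)^2 := h
    · right
      refine ⟨ρ/h₁, ρ/h₂, ?_, ?_, ?_, ?_, ?_⟩
      · rw [div_mul_cancel₀ _ (ne_of_gt hh₁)]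
      · rw [div_mul_cancel₀ _ (ne_of_gt hh₁)]; linarith
      · rw [div_mul_cancel₀ _ (ne_of_gt hh₂)]
      · rw [div_mul_cancel₀ _ (ne_of_gt hh₂)]; linarith
      · calc (h₁*(u-ρ/h₁))^2 + 2*c*h₁*h₂*(u-ρ/h₁)*(v-ρ/h₂) + (h₂*(v-ρ/h₂))^2
            = (ρ-u*h₁)^2 + 2*c*(ρ-u*h₁)*(ρ-v*h₂) + (ρ-v*h₂)^2 := by
              field_simp
              all_goals ring
          _ ≤ ((ν-1)*ρ*s)^2 := h
  · by_cases hc2 : (1-v)*h₂ ≤ ρ + max (-c) 0 * (ρ - u*h₁)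
    · -- corner (0,1), effective cross sign -c
      have hcs' : s^2 + (-c)^2 = 1 := by rw [neg_pow]; simpa using hcs
      have hν' : (|-c| < 3/5 ∧ ν = 2) ∨
          (3/5 ≤ |-c| ∧ 0 < s + |-c| - 1 ∧ 2*ν*(s+|-c|-1) = 1+|-c|) := by
        rwa [abs_neg]
      rcases core_scaled (-c) s ν ρ (u*h₁) ((1-v)*h₂) hs hcs' hν' hρ hd10 huh
          (mul_nonneg (by linarith) hh₂.le) hc2 with h | h
      · left
        refine ⟨1, Or.inr rfl, ?_⟩
        calc (h₁*u)^2 + 2*c*h₁*h₂*u*(v-1) + (h₂*(v-1))^2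
            = (u*h₁)^2 + 2*(-c)*(u*h₁)*((1-v)*h₂) + ((1-v)*h₂)^2 := by ring
          _ ≤ (ν*ρ*s)^2 := h
      · right
        refine ⟨ρ/h₁, 1-ρ/h₂, ?_, ?_, ?_, ?_, ?_⟩
        · rw [div_mul_cancel₀ _ (ne_of_gt hh₁)]
        · rw [div_mul_cancel₀ _ (ne_of_gt hh₁)]; linarith
        · rw [sub_mul, one_mul, div_mul_cancel₀ _ (ne_of_gt hh₂)]; linarith
        · rw [sub_mul, one_mul, div_mul_cancel₀ _ (ne_of_gt hh₂)]
        · calc (h₁*(u-ρ/h₁))^2 + 2*c*h₁*h₂*(u-ρ/h₁)*(v-(1-ρ/h₂)) + (h₂*(v-(1-ρ/h₂)))^2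
              = (ρ-u*h₁)^2 + 2*(-c)*(ρ-u*h₁)*(ρ-(1-v)*h₂) + (ρ-(1-v)*h₂)^2 := by
                field_simp
                all_goals ring
            _ ≤ ((ν-1)*ρ*s)^2 := h
    · -- perpendicular projection
      push_neg at hc1 hc2
      right
      refine ⟨ρ/h₁, v - c*(ρ-u*h₁)/h₂, ?_, ?_, ?_, ?_, ?_⟩
      · rw [div_mul_cancel₀ _ (ne_of_gt hh₁)]
      · rw [div_mul_cancel₀ _ (ne_of_gt hh₁)]; linarith
      · have e : (v - c*(ρ-u*h₁)/h₂)*h₂ = v*h₂ - c*(ρ-u*h₁) := by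
          field_simp
        rw [e]
        have h1 : (0:ℝ) ≤ max c 0 - c := by linarith [le_max_left c 0]
        nlinarith [mul_nonneg h1 (by linarith : (0:ℝ) ≤ ρ - u*h₁)]
      · have e : (v - c*(ρ-u*h₁)/h₂)*h₂ = v*h₂ - c*(ρ-u*h₁) := by
          field_simp
        rw [e]
        have h1 : (0:ℝ) ≤ max (-c) 0 + c := by linarith [le_max_left (-c) 0]
        nlinarith [mul_nonneg h1 (by linarith : (0:ℝ) ≤ ρ - u*h₁), hc2]
      · have e1 : h₁*(u-ρ/h₁) = u*h₁ - ρ := by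
          field_simp
        have e2 : h₂*(v-(v - c*(ρ-u*h₁)/h₂)) = c*(ρ-u*h₁) := by
          field_simp
          ring
        have E : (h₁*(u-ρ/h₁))^2 + 2*c*h₁*h₂*(u-ρ/h₁)*(v-(v - c*(ρ-u*h₁)/h₂))
            + (h₂*(v-(v - c*(ρ-u*h₁)/h₂)))^2
            = (h₁*(u-ρ/h₁))^2 + 2*c*(h₁*(u-ρ/h₁))*(h₂*(v-(v - c*(ρ-u*h₁)/h₂)))
              + (h₂*(v-(v - c*(ρ-u*h₁)/h₂)))^2 := by ring
        rw [E, e1, e2]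
        have eval : (u*h₁-ρ)^2 + 2*c*(u*h₁-ρ)*(c*(ρ-u*h₁)) + (c*(ρ-u*h₁))^2
            = (ρ-u*h₁)^2*s^2 := by linear_combination (-(ρ-u*h₁)^2)*hcs
        rw [eval]
        have h1 : (ρ-u*h₁)^2 ≤ ρ^2 := by nlinarith
        have h3 : 1 ≤ (ν-1)^2 := by nlinarith
        have h4 : (ρ-u*h₁)^2*s^2 ≤ ρ^2*s^2 := mul_le_mul_of_nonneg_right h1 (sq_nonneg s)
        nlinarith [mul_le_mul_of_nonneg_left h3 (mul_nonneg (sq_nonneg ρ) (sq_nonneg s))]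

private lemma maincoord (c s ν ρ h₁ h₂ u v : ℝ)
    (hs : 0 < s) (hcs : s^2 + c^2 = 1)
    (hν : (|c| < 3/5 ∧ ν = 2) ∨ (3/5 ≤ |c| ∧ 0 < s + |c| - 1 ∧ 2*ν*(s+|c|-1) = 1+|c|))
    (hρ : 0 < ρ) (hh₁ : 0 < h₁) (hh₂ : 0 < h₂) (h2ρ1 : 2*ρ < h₁) (h2ρ2 : 2*ρ < h₂)
    (hu0 : 0 ≤ u) (hu1 : u ≤ 1) (hv0 : 0 ≤ v) (hv1 : v ≤ 1) :
    (∃ cu cv : ℝ, (cu = 0 ∨ cu = 1) ∧ (cv = 0 ∨ cv = 1) ∧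
      (h₁*(u-cu))^2 + 2*c*h₁*h₂*(u-cu)*(v-cv) + (h₂*(v-cv))^2 ≤ (ν*ρ*s)^2) ∨
    (∃ qu qv : ℝ, ρ ≤ qu*h₁ ∧ qu*h₁ ≤ h₁-ρ ∧ ρ ≤ qv*h₂ ∧ qv*h₂ ≤ h₂-ρ ∧
      (h₁*(u-qu))^2 + 2*c*h₁*h₂*(u-qu)*(v-qv) + (h₂*(v-qv))^2 ≤ ((ν-1)*ρ*s)^2) := by
  have hcs' : s^2 + (-c)^2 = 1 := by rw [neg_pow]; simpa using hcs
  have hν' : (|-c| < 3/5 ∧ ν = 2) ∨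
      (3/5 ≤ |-c| ∧ 0 < s + |-c| - 1 ∧ 2*ν*(s+|-c|-1) = 1+|-c|) := by rwa [abs_neg]
  by_cases hA1 : u*h₁ ≤ ρ
  · rcases onecase c s ν ρ h₁ h₂ u v hs hcs hν hρ hh₁ hh₂ h2ρ1 h2ρ2 hu0 hA1 hv0 hv1 with
      ⟨cv, hcv, hle⟩ | ⟨qu, qv, hq1, hq2, hq3, hq4, hle⟩
    · left
      exact ⟨0, cv, Or.inl rfl, hcv, by calc (h₁*(u-0))^2 + 2*c*h₁*h₂*(u-0)*(v-cv) + (h₂*(v-cv))^2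
          = (h₁*u)^2 + 2*c*h₁*h₂*u*(v-cv) + (h₂*(v-cv))^2 := by ring
        _ ≤ (ν*ρ*s)^2 := hle⟩
    · exact Or.inr ⟨qu, qv, hq1, hq2, hq3, hq4, hle⟩
  · by_cases hA2 : (1-u)*h₁ ≤ ρ
    · rcases onecase (-c) s ν ρ h₁ h₂ (1-u) v hs hcs' hν' hρ hh₁ hh₂ h2ρ1 h2ρ2
        (by linarith) hA2 hv0 hv1 with
        ⟨cv, hcv, hle⟩ | ⟨qu, qv, hq1, hq2, hq3, hq4, hle⟩
      · left
        refine ⟨1, cv, Or.inr rfl, hcv, ?_⟩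
        calc (h₁*(u-1))^2 + 2*c*h₁*h₂*(u-1)*(v-cv) + (h₂*(v-cv))^2
            = (h₁*(1-u))^2 + 2*(-c)*h₁*h₂*(1-u)*(v-cv) + (h₂*(v-cv))^2 := by ring
          _ ≤ (ν*ρ*s)^2 := hle
      · right
        refine ⟨1-qu, qv, ?_, ?_, hq3, hq4, ?_⟩
        · have : (1-qu)*h₁ = h₁ - qu*h₁ := by ring
          rw [this]; linarith
        · have : (1-qu)*h₁ = h₁ - qu*h₁ := by ring
          rw [this]; linarith
        · calc (h₁*(u-(1-qu)))^2 + 2*c*h₁*h₂*(u-(1-qu))*(v-qv) + (h₂*(v-qv))^2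
              = (h₁*((1-u)-qu))^2 + 2*(-c)*h₁*h₂*((1-u)-qu)*(v-qv) + (h₂*(v-qv))^2 := by ring
            _ ≤ ((ν-1)*ρ*s)^2 := hle
    · by_cases hB1 : v*h₂ ≤ ρ
      · rcases onecase c s ν ρ h₂ h₁ v u hs hcs hν hρ hh₂ hh₁ h2ρ2 h2ρ1 hv0 hB1 hu0 hu1 with
          ⟨cv, hcv, hle⟩ | ⟨qu, qv, hq1, hq2, hq3, hq4, hle⟩
        · left
          refine ⟨cv, 0, hcv, Or.inl rfl, ?_⟩
          calc (h₁*(u-cv))^2 + 2*c*h₁*h₂*(u-cv)*(v-0) + (h₂*(v-0))^2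
              = (h₂*v)^2 + 2*c*h₂*h₁*v*(u-cv) + (h₁*(u-cv))^2 := by ring
            _ ≤ (ν*ρ*s)^2 := hle
        · right
          refine ⟨qv, qu, hq3, hq4, hq1, hq2, ?_⟩
          calc (h₁*(u-qv))^2 + 2*c*h₁*h₂*(u-qv)*(v-qu) + (h₂*(v-qu))^2
              = (h₂*(v-qu))^2 + 2*c*h₂*h₁*(v-qu)*(u-qv) + (h₁*(u-qv))^2 := by ring
            _ ≤ ((ν-1)*ρ*s)^2 := hle
      · by_cases hB2 : (1-v)*h₂ ≤ ρ
        · rcases onecase (-c) s ν ρ h₂ h₁ (1-v) u hs hcs' hν' hρ hh₂ hh₁ h2ρ2 h2ρ1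
            (by linarith) hB2 hu0 hu1 with
            ⟨cv, hcv, hle⟩ | ⟨qu, qv, hq1, hq2, hq3, hq4, hle⟩
          · left
            refine ⟨cv, 1, hcv, Or.inr rfl, ?_⟩
            calc (h₁*(u-cv))^2 + 2*c*h₁*h₂*(u-cv)*(v-1) + (h₂*(v-1))^2
                = (h₂*(1-v))^2 + 2*(-c)*h₂*h₁*(1-v)*(u-cv) + (h₁*(u-cv))^2 := by ring
              _ ≤ (ν*ρ*s)^2 := hle
          · right
            refine ⟨qv, 1-qu, hq3, hq4, ?_, ?_, ?_⟩
            · have : (1-qu)*h₂ = h₂ - qu*h₂ := by ring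
              rw [this]; linarith
            · have : (1-qu)*h₂ = h₂ - qu*h₂ := by ring
              rw [this]; linarith
            · calc (h₁*(u-qv))^2 + 2*c*h₁*h₂*(u-qv)*(v-(1-qu)) + (h₂*(v-(1-qu)))^2
                  = (h₂*((1-v)-qu))^2 + 2*(-c)*h₂*h₁*((1-v)-qu)*(u-qv) + (h₁*(u-qv))^2 := by
                    ring
                _ ≤ ((ν-1)*ρ*s)^2 := hle
        · push_neg at hA1 hA2 hB1 hB2
          right
          have e1 : (1-u)*h₁ = h₁ - u*h₁ := by ring
          have e2 : (1-v)*h₂ = h₂ - v*h₂ := by ring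
          rw [e1] at hA2; rw [e2] at hB2
          refine ⟨u, v, by linarith, by linarith, by linarith, by linarith, ?_⟩
          have : (h₁*(u-u))^2 + 2*c*h₁*h₂*(u-u)*(v-v) + (h₂*(v-v))^2 = 0 := by ring
          rw [this]
          positivity

lemma nu1_spec (θ : ℝ) (hθ : θ ∈ Set.Ioo 0 Real.pi) :
    (|Real.cos θ| < 3/5 ∧ nu1 θ = 2) ∨
      (3/5 ≤ |Real.cos θ| ∧ 0 < Real.sin θ + |Real.cos θ| - 1 ∧
        2*(nu1 θ)*(Real.sin θ + |Real.cos θ| - 1) = 1 + |Real.cos θ|) := by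
  obtain ⟨hθ0, hθπ⟩ := hθ
  have hpi : 0 < Real.pi := Real.pi_pos
  have hS : 0 < Real.sin (θ/2) :=
    Real.sin_pos_of_pos_of_lt_pi (by linarith) (by linarith)
  have hC : 0 < Real.cos (θ/2) :=
    Real.cos_pos_of_mem_Ioo ⟨by linarith, by linarith⟩
  have hSC : Real.sin (θ/2)^2 + Real.cos (θ/2)^2 = 1 := Real.sin_sq_add_cos_sq _
  have hcosθ : Real.cos θ = 2*Real.cos (θ/2)^2 - 1 := by
    rw [show θ = 2*(θ/2) by ring, Real.cos_two_mul]
    ring_nf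
  have htan : Real.tan (θ/2) = Real.sin (θ/2) / Real.cos (θ/2) := Real.tan_eq_sin_div_cos _
  set S := Real.sin (θ/2)
  set C := Real.cos (θ/2)
  by_cases hbr : 1/2 < Real.tan (θ/2) ∧ Real.tan (θ/2) < 2
  · left
    constructor
    · obtain ⟨h1, h2⟩ := hbr
      rw [htan] at h1 h2
      have hC2S : C < 2*S := by
        have := (lt_div_iff₀ hC).1 h1
        linarith
      have hS2C : S < 2*C := by
        have := (div_lt_iff₀ hC).1 h2
        linarith
      have e1 : Real.cos θ < 3/5 := by nlinarith
      have e2 : -(3/5) < Real.cos θ := by nlinarith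
      rw [abs_lt]; exact ⟨by linarith, e1⟩
    · rw [nu1, if_pos hbr]
  · right
    have hbr0 := hbr
    push_neg at hbr
    have habs : 3/5 ≤ |Real.cos θ| := by
      by_cases h1 : 1/2 < Real.tan (θ/2)
      · have h2 := hbr h1
        rw [htan] at h2
        have : 2*C ≤ S := by
          have := (le_div_iff₀ hC).1 h2
          linarith
        have : Real.cos θ ≤ -(3/5) := by nlinarith
        calc (3:ℝ)/5 ≤ -Real.cos θ := by linarith
          _ ≤ |Real.cos θ| := by rw [abs_eq_max_neg]; exact le_max_right _ _
      · push_neg at h1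
        rw [htan] at h1
        have : 2*S ≤ C := by
          have := (div_le_iff₀ hC).1 h1
          linarith
        have : 3/5 ≤ Real.cos θ := by nlinarith
        calc (3:ℝ)/5 ≤ Real.cos θ := this
          _ ≤ |Real.cos θ| := le_abs_self _
    have hs : 0 < Real.sin θ := Real.sin_pos_of_pos_of_lt_pi hθ0 hθπ
    have hs1 : Real.sin θ ≤ 1 := Real.sin_le_one θ
    have hpyth : Real.sin θ^2 + Real.cos θ^2 = 1 := Real.sin_sq_add_cos_sq θ
    have hcabs : |Real.cos θ| ≤ 1 := Real.abs_cos_le_one θ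
    have hden : 0 < Real.sin θ + |Real.cos θ| - 1 := by
      have h1 : Real.cos θ^2 > 0 := by nlinarith [sq_abs (Real.cos θ)]
      have h2 : Real.sin θ < 1 := by nlinarith
      nlinarith [sq_abs (Real.cos θ), abs_nonneg (Real.cos θ)]
    refine ⟨habs, hden, ?_⟩
    rw [nu1, if_neg hbr0]
    field_simp

private def det2 (η₁ η₂ : ℂ) : ℝ := η₁.im * η₂.re - η₁.re * η₂.im
private noncomputable def xco (η₁ η₂ z : ℂ) : ℝ := (z.im * η₂.re - z.re * η₂.im) / det2 η₁ η₂
private noncomputable def yco (η₁ η₂ z : ℂ) : ℝ := (z.re * η₁.im - z.im * η₁.re) / det2 η₁ η₂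

private lemma recon (η₁ η₂ : ℂ) (h : det2 η₁ η₂ ≠ 0) (z : ℂ) :
    z = (xco η₁ η₂ z : ℂ) * η₁ + (yco η₁ η₂ z : ℂ) * η₂ := by
  unfold xco yco det2 at *
  have h' : η₂.re * η₁.im - η₂.im * η₁.re ≠ 0 := by intro h0; apply h; linarith
  apply Complex.ext
  · simp only [Complex.add_re, Complex.mul_re, Complex.ofReal_re, Complex.ofReal_im]
    field_simp; ring
  · simp only [Complex.add_im, Complex.mul_im, Complex.ofReal_re, Complex.ofReal_im]
    field_simp; ring

private lemma xco_combo (η₁ η₂ : ℂ) (h : det2 η₁ η₂ ≠ 0) (a b : ℝ) :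
    xco η₁ η₂ ((a:ℂ)*η₁ + (b:ℂ)*η₂) = a := by
  unfold xco det2 at *
  simp only [Complex.add_re, Complex.add_im, Complex.mul_re, Complex.mul_im,
    Complex.ofReal_re, Complex.ofReal_im]
  field_simp; ring

private lemma yco_combo (η₁ η₂ : ℂ) (h : det2 η₁ η₂ ≠ 0) (a b : ℝ) :
    yco η₁ η₂ ((a:ℂ)*η₁ + (b:ℂ)*η₂) = b := by
  unfold yco det2 at *
  simp only [Complex.add_re, Complex.add_im, Complex.mul_re, Complex.mul_im,
    Complex.ofReal_re, Complex.ofReal_im]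
  field_simp; ring

private lemma xco_lip (η₁ η₂ z : ℂ) :
    |xco η₁ η₂ z| ≤ norm z * norm η₂ / |det2 η₁ η₂| := by
  have h1 : xco η₁ η₂ z = (z * (starRingEnd ℂ) η₂).im / det2 η₁ η₂ := by
    unfold xco
    simp only [Complex.mul_im, Complex.conj_re, Complex.conj_im]
    ring_nf
  rw [h1, abs_div]
  gcongr ?_ / _
  calc |(z * (starRingEnd ℂ) η₂).im| ≤ norm (z * (starRingEnd ℂ) η₂) :=
        Complex.abs_im_le_norm _
    _ = norm z * norm η₂ := by rw [norm_mul, Complex.norm_conj]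

private lemma yco_lip (η₁ η₂ z : ℂ) :
    |yco η₁ η₂ z| ≤ norm z * norm η₁ / |det2 η₁ η₂| := by
  have h1 : yco η₁ η₂ z = (-(z * (starRingEnd ℂ) η₁).im) / det2 η₁ η₂ := by
    unfold yco
    simp only [Complex.mul_im, Complex.conj_re, Complex.conj_im]
    ring_nf
  rw [h1, abs_div, abs_neg]
  gcongr ?_ / _
  calc |(z * (starRingEnd ℂ) η₁).im| ≤ norm (z * (starRingEnd ℂ) η₁) :=
        Complex.abs_im_le_norm _
    _ = norm z * norm η₁ := by rw [norm_mul, Complex.norm_conj]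

private lemma lat_fin (η₁ η₂ : ℂ) (h : det2 η₁ η₂ ≠ 0) (c₀ : ℂ) (M : ℝ) :
    {d : ℂ | d ∈ lat η₁ η₂ ∧ norm (d - c₀) ≤ M}.Finite := by
  set B := M + norm c₀ with hB
  set L₁ := norm η₁
  set L₂ := norm η₂
  set N : ℕ := ⌈B * (L₁ + L₂) / |det2 η₁ η₂|⌉₊ with hN
  apply Set.Finite.subset (Set.Finite.image
    (f := fun p : ℤ × ℤ => (p.1:ℂ)*η₁ + (p.2:ℂ)*η₂)
    (Set.Finite.prod (Set.finite_Icc (-(N:ℤ)) N) (Set.finite_Icc (-(N:ℤ)) N)))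
  rintro d ⟨⟨m, n, rfl⟩, hd⟩
  have hdabs : norm ((m:ℂ)*η₁ + (n:ℂ)*η₂) ≤ B := by
    calc norm ((m:ℂ)*η₁ + (n:ℂ)*η₂)
        = norm (((m:ℂ)*η₁ + (n:ℂ)*η₂ - c₀) + c₀) := by ring_nf
      _ ≤ norm ((m:ℂ)*η₁ + (n:ℂ)*η₂ - c₀) + norm c₀ := norm_add_le _ _
      _ ≤ B := by rw [hB]; linarith
  have hdet : 0 < |det2 η₁ η₂| := abs_pos.2 h
  have hB0 : 0 ≤ B := le_trans (norm_nonneg _) hdabs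
  have hL₁ : 0 ≤ L₁ := norm_nonneg _
  have hL₂ : 0 ≤ L₂ := norm_nonneg _
  have hmR : |(m:ℝ)| ≤ (N:ℝ) := by
    have h1 : |(m:ℝ)| = |xco η₁ η₂ ((m:ℂ)*η₁ + (n:ℂ)*η₂)| := by
      rw [show ((m:ℂ)*η₁ + (n:ℂ)*η₂) = (((m:ℤ):ℝ):ℂ)*η₁ + (((n:ℤ):ℝ):ℂ)*η₂ by push_cast; ring,
        xco_combo η₁ η₂ h]
    rw [h1]
    calc |xco η₁ η₂ ((m:ℂ)*η₁ + (n:ℂ)*η₂)|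
        ≤ norm ((m:ℂ)*η₁ + (n:ℂ)*η₂) * L₂ / |det2 η₁ η₂| := xco_lip η₁ η₂ _
      _ ≤ B * (L₁+L₂) / |det2 η₁ η₂| := by
          apply div_le_div_of_nonneg_right ?_ hdet.le |>.trans_eq rfl
          nlinarith
      _ ≤ N := Nat.le_ceil _
  have hnR : |(n:ℝ)| ≤ (N:ℝ) := by
    have h1 : |(n:ℝ)| = |yco η₁ η₂ ((m:ℂ)*η₁ + (n:ℂ)*η₂)| := by
      rw [show ((m:ℂ)*η₁ + (n:ℂ)*η₂) = (((m:ℤ):ℝ):ℂ)*η₁ + (((n:ℤ):ℝ):ℂ)*η₂ by push_cast; ring,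
        yco_combo η₁ η₂ h]
    rw [h1]
    calc |yco η₁ η₂ ((m:ℂ)*η₁ + (n:ℂ)*η₂)|
        ≤ norm ((m:ℂ)*η₁ + (n:ℂ)*η₂) * L₁ / |det2 η₁ η₂| := yco_lip η₁ η₂ _
      _ ≤ B * (L₁+L₂) / |det2 η₁ η₂| := by
          apply div_le_div_of_nonneg_right ?_ hdet.le |>.trans_eq rfl
          nlinarith
      _ ≤ N := Nat.le_ceil _
  refine ⟨(m, n), ⟨?_, ?_⟩, rfl⟩ <;> rw [Set.mem_Icc] <;> constructor <;>
    [skip; skip; skip; skip]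
  · exact_mod_cast neg_le_of_abs_le hmR
  · exact_mod_cast le_of_abs_le hmR
  · exact_mod_cast neg_le_of_abs_le hnR
  · exact_mod_cast le_of_abs_le hnR

private lemma lat_floor (η₁ η₂ : ℂ) (h : det2 η₁ η₂ ≠ 0) (z : ℂ) :
    ∃ d ∈ lat η₁ η₂, norm (z - d) ≤ norm η₁ + norm η₂ := by
  obtain ⟨a, ha⟩ : ∃ a : ℤ, a = ⌊xco η₁ η₂ z⌋ := ⟨_, rfl⟩
  obtain ⟨b, hb⟩ : ∃ b : ℤ, b = ⌊yco η₁ η₂ z⌋ := ⟨_, rfl⟩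
  refine ⟨(a : ℂ)*η₁ + (b:ℂ)*η₂, ⟨_, _, rfl⟩, ?_⟩
  have hz := recon η₁ η₂ h z
  have hzd : z - ((a : ℂ)*η₁ + (b:ℂ)*η₂) =
      ((xco η₁ η₂ z - a : ℝ):ℂ)*η₁ + ((yco η₁ η₂ z - b : ℝ):ℂ)*η₂ := by
    conv_lhs => rw [hz]
    push_cast
    ring
  rw [hzd]
  calc norm _ ≤ norm (((xco η₁ η₂ z - a : ℝ):ℂ)*η₁)
        + norm (((yco η₁ η₂ z - b : ℝ):ℂ)*η₂) := norm_add_le _ _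
    _ ≤ norm η₁ + norm η₂ := by
        rw [norm_mul, norm_mul, Complex.norm_real, Real.norm_eq_abs, Complex.norm_real, Real.norm_eq_abs]
        have h1 : |xco η₁ η₂ z - (a:ℝ)| ≤ 1 := by
          rw [ha, abs_of_nonneg (by push_cast; linarith [Int.floor_le (xco η₁ η₂ z)])]
          push_cast
          linarith [Int.lt_floor_add_one (xco η₁ η₂ z)]
        have h2 : |yco η₁ η₂ z - (b:ℝ)| ≤ 1 := by
          rw [hb, abs_of_nonneg (by push_cast; linarith [Int.floor_le (yco η₁ η₂ z)])]
          push_cast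
          linarith [Int.lt_floor_add_one (yco η₁ η₂ z)]
        nlinarith [norm_nonneg η₁, norm_nonneg η₂]

private lemma covRad_attained (η₁ η₂ : ℂ) (h : det2 η₁ η₂ ≠ 0) (z : ℂ) :
    ∃ d ∈ lat η₁ η₂, dist z d ≤ covRad η₁ η₂ := by
  set R₀ : ℝ := norm η₁ + norm η₂ + 1 with hR₀
  have hR₀pos : 0 < R₀ := by positivity
  have hmem : R₀ ∈ {R : ℝ | 0 < R ∧ ∀ z : ℂ, ∃ d ∈ lat η₁ η₂, dist z d ≤ R} := by
    refine ⟨hR₀pos, fun w => ?_⟩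
    obtain ⟨d, hd, hdist⟩ := lat_floor η₁ η₂ h w
    exact ⟨d, hd, by rw [Complex.dist_eq]; linarith⟩
  have hCfin : {d : ℂ | d ∈ lat η₁ η₂ ∧ norm (d - z) ≤ R₀}.Finite :=
    lat_fin η₁ η₂ h z R₀
  obtain ⟨d₀, hd₀lat, hd₀⟩ := lat_floor η₁ η₂ h z
  have hd₀' : d₀ ∈ {d : ℂ | d ∈ lat η₁ η₂ ∧ norm (d - z) ≤ R₀} :=
    ⟨hd₀lat, by rw [← norm_sub_rev]; linarith⟩
  have hne : hCfin.toFinset.Nonempty := ⟨d₀, hCfin.mem_toFinset.2 hd₀'⟩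
  obtain ⟨dm, hdmmem, hdmmin⟩ := hCfin.toFinset.exists_min_image (fun d => dist z d) hne
  rw [Set.Finite.mem_toFinset] at hdmmem
  refine ⟨dm, hdmmem.1, ?_⟩
  apply le_csInf ⟨R₀, hmem⟩
  intro R hR
  obtain ⟨dR, hdRlat, hdR⟩ := hR.2 z
  by_cases hcase : norm (dR - z) ≤ R₀
  · have : dR ∈ hCfin.toFinset := hCfin.mem_toFinset.2 ⟨hdRlat, hcase⟩
    exact le_trans (hdmmin dR this) hdR
  · push_neg at hcase
    have h1 : dist z dm ≤ dist z d₀ := hdmmin d₀ (hCfin.mem_toFinset.2 hd₀')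
    have h2 : dist z d₀ ≤ R₀ := by rw [Complex.dist_eq]; linarith
    have h3 : R₀ < dist z dR := by
      calc R₀ < norm (dR - z) := hcase
        _ = dist z dR := by rw [Complex.dist_eq, norm_sub_rev]
    linarith


private lemma xco_sub (η₁ η₂ z w : ℂ) : xco η₁ η₂ (z - w) = xco η₁ η₂ z - xco η₁ η₂ w := by
  unfold xco; simp only [Complex.sub_re, Complex.sub_im]; ring

private lemma yco_sub (η₁ η₂ z w : ℂ) : yco η₁ η₂ (z - w) = yco η₁ η₂ z - yco η₁ η₂ w := by
  unfold yco; simp only [Complex.sub_re, Complex.sub_im]; ring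

private lemma normQ (η₁ η₂ : ℂ) (a b : ℝ) :
    (norm ((a:ℂ)*η₁ + (b:ℂ)*η₂))^2 =
      (norm η₁)^2*a^2 + 2*(η₁.re*η₂.re + η₁.im*η₂.im)*a*b + (norm η₂)^2*b^2 := by
  rw [Complex.sq_norm, Complex.sq_norm, Complex.sq_norm, Complex.normSq_apply,
    Complex.normSq_apply, Complex.normSq_apply]
  simp only [Complex.add_re, Complex.add_im, Complex.mul_re, Complex.mul_im,
    Complex.ofReal_re, Complex.ofReal_im]
  ring

private lemma lagrange (η₁ η₂ : ℂ) :
    (det2 η₁ η₂)^2 + (η₁.re*η₂.re + η₁.im*η₂.im)^2 = (norm η₁)^2 * (norm η₂)^2 := by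
  rw [Complex.sq_norm, Complex.sq_norm, Complex.normSq_apply, Complex.normSq_apply]
  unfold det2; ring

private lemma covRad_nonneg (η₁ η₂ : ℂ) : 0 ≤ covRad η₁ η₂ :=
  Real.sInf_nonneg (fun R hR => hR.1.le)

/-- If β·w(X) > 2·r(L), then ({ξ} ∪ T^{−1}(ξ)) + L is a
(ν₁(θ)·r(L)/β)-covering of all of ℂ, where
T^{−1}(ξ) = (βζ)^{−1}·((ξ + L) ∩ βζX) = {z ∈ X : βζz − ξ ∈ L}. -/
theorem statement10
    (β : ℝ) (hβ : 1 < β)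
    (ζ : ℂ) (hζabs : ‖ζ‖ = 1) (hζR : ζ.im ≠ 0)
    (ξ η₁ η₂ : ℂ) (hη : (η₁ / η₂).im ≠ 0)
    (θ : ℝ) (hθ : θ ∈ Set.Ioo 0 Real.pi)
    (hcos : Real.cos θ = (η₁ * (starRingEnd ℂ) η₂).re / (‖η₁‖ * ‖η₂‖))
    (hcov : 2 * covRad η₁ η₂ < β * width θ η₁ η₂) :
    IsCovering (nu1 θ * covRad η₁ η₂ / β)
      (Set.image2 (· + ·)
        ({ξ} ∪ {z : ℂ | z ∈ fund ξ η₁ η₂ ∧ (β : ℂ) * ζ * z - ξ ∈ lat η₁ η₂})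
        (lat η₁ η₂))
      Set.univ := by
  intro z _
  have hβ0 : (0:ℝ) < β := by linarith
  have hsθ : 0 < Real.sin θ := Real.sin_pos_of_pos_of_lt_pi hθ.1 hθ.2
  have hη₂ : η₂ ≠ 0 := by
    intro h; rw [h, div_zero] at hη; exact hη rfl
  have hη₁ : η₁ ≠ 0 := by
    intro h; rw [h, zero_div] at hη; exact hη rfl
  have hL₁ : 0 < norm η₁ := norm_pos_iff.2 hη₁
  have hL₂ : 0 < norm η₂ := norm_pos_iff.2 hη₂
  have hdet : det2 η₁ η₂ ≠ 0 := by
    have h1 : (η₁/η₂).im * Complex.normSq η₂ = det2 η₁ η₂ := by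
      rw [Complex.div_im]
      unfold det2
      have := Complex.normSq_pos.2 hη₂
      field_simp
      all_goals ring
    rw [← h1]
    exact mul_ne_zero hη (ne_of_gt (Complex.normSq_pos.2 hη₂))
  have hpyth : Real.sin θ^2 + Real.cos θ^2 = 1 := Real.sin_sq_add_cos_sq θ
  have hdot : η₁.re*η₂.re + η₁.im*η₂.im = Real.cos θ * (norm η₁ * norm η₂) := by
    have h1 : (η₁ * (starRingEnd ℂ) η₂).re = η₁.re*η₂.re + η₁.im*η₂.im := by
      simp [Complex.mul_re, Complex.conj_re, Complex.conj_im]; all_goals ring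
    have h2 : Real.cos θ * (norm η₁ * norm η₂) = (η₁ * (starRingEnd ℂ) η₂).re := by
      rw [hcos]; field_simp
    rw [h1] at h2
    linarith
  have habsdet : |det2 η₁ η₂| = norm η₁ * norm η₂ * Real.sin θ := by
    have h2 : |det2 η₁ η₂|^2 = (norm η₁ * norm η₂ * Real.sin θ)^2 := by
      rw [sq_abs]
      linear_combination lagrange η₁ η₂
        - ((η₁.re*η₂.re + η₁.im*η₂.im) + Real.cos θ*(norm η₁*norm η₂))*hdot
        - ((norm η₁*norm η₂)^2)*hpyth
    exact le_antisymm
      (sq_le_sq_imp _ _ (abs_nonneg _) (by positivity) (le_of_eq h2))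
      (sq_le_sq_imp _ _ (by positivity) (abs_nonneg _) (le_of_eq h2.symm))
  have hν := nu1_spec θ hθ
  have hν2 : 2 ≤ nu1 θ := nu_ge_two (Real.cos θ) (Real.sin θ) (nu1 θ) hsθ hpyth hν
  have hρ0 : 0 ≤ covRad η₁ η₂ / β := div_nonneg (covRad_nonneg η₁ η₂) hβ0.le
  have hWmin : 2 * (covRad η₁ η₂ / β) < min (norm η₁) (norm η₂) * Real.sin θ := by
    have h := hcov
    unfold width at h
    have e : 2*(covRad η₁ η₂/β) = 2*covRad η₁ η₂/β := by ring
    rw [e, div_lt_iff₀ hβ0]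
    have h' : β*(min (norm η₁) (norm η₂) * Real.sin θ)
        = (min (norm η₁) (norm η₂) * Real.sin θ)*β := by ring
    linarith [h' ▸ h]
  have hh₁ : 0 < norm η₁ * Real.sin θ := mul_pos hL₁ hsθ
  have hh₂ : 0 < norm η₂ * Real.sin θ := mul_pos hL₂ hsθ
  have hWh₁ : min (norm η₁) (norm η₂) * Real.sin θ ≤ norm η₁ * Real.sin θ :=
    mul_le_mul_of_nonneg_right (min_le_left _ _) hsθ.le
  have hWh₂ : min (norm η₁) (norm η₂) * Real.sin θ ≤ norm η₂ * Real.sin θ :=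
    mul_le_mul_of_nonneg_right (min_le_right _ _) hsθ.le
  have hbzabs : norm ((β:ℂ)*ζ) = β := by
    rw [norm_mul, Complex.norm_real, Real.norm_eq_abs, hζabs, mul_one, abs_of_pos hβ0]
  have hbzne : ((β:ℂ)*ζ) ≠ 0 := by
    intro h
    have : norm ((β:ℂ)*ζ) = 0 := by rw [h]; simp
    rw [hbzabs] at this; linarith
  have hζ0 : ζ ≠ 0 := fun h => hbzne (by rw [h, mul_zero])
  have hβC : (β:ℂ) ≠ 0 := Complex.ofReal_ne_zero.2 hβ0.ne'
  -- distance bound via the quadratic form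
  have habs_le : ∀ (a b B : ℝ), 0 ≤ B →
      (norm η₁*Real.sin θ*a)^2
        + 2*Real.cos θ*(norm η₁*Real.sin θ)*(norm η₂*Real.sin θ)*a*b
        + (norm η₂*Real.sin θ*b)^2 ≤ (B*Real.sin θ)^2 →
      norm ((a:ℂ)*η₁ + (b:ℂ)*η₂) ≤ B := by
    intro a b B hB hle
    have hQ := normQ η₁ η₂ a b
    rw [hdot] at hQ
    have e1 : ((norm η₁)^2*a^2 + 2*(Real.cos θ*(norm η₁*norm η₂))*a*b
        + (norm η₂)^2*b^2) * (Real.sin θ)^2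
        = (norm η₁*Real.sin θ*a)^2
          + 2*Real.cos θ*(norm η₁*Real.sin θ)*(norm η₂*Real.sin θ)*a*b
          + (norm η₂*Real.sin θ*b)^2 := by ring
    have e2 : (B*Real.sin θ)^2 = B^2*(Real.sin θ)^2 := by ring
    refine sq_le_sq_imp _ _ (norm_nonneg _) hB ?_
    have h3 : (norm ((a:ℂ)*η₁ + (b:ℂ)*η₂))^2 * (Real.sin θ)^2 ≤ B^2*(Real.sin θ)^2 := by
      rw [hQ, e1, ← e2]; exact hle
    have hs2 : 0 < (Real.sin θ)^2 := by positivity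
    exact le_of_mul_le_mul_right h3 hs2
  -- the epsilon-covering claim
  have main : ∀ ρ' : ℝ, covRad η₁ η₂ / β < ρ' →
      2*ρ' < min (norm η₁) (norm η₂) * Real.sin θ →
      ∃ s ∈ (Set.image2 (· + ·)
        ({ξ} ∪ {z' : ℂ | z' ∈ fund ξ η₁ η₂ ∧ (β : ℂ) * ζ * z' - ξ ∈ lat η₁ η₂})
        (lat η₁ η₂)), dist z s ≤ nu1 θ * ρ' := by
    intro ρ' hlo hhi
    have hρ'pos : 0 < ρ' := lt_of_le_of_lt hρ0 hlo
    have h2ρ1 : 2*ρ' < norm η₁ * Real.sin θ := lt_of_lt_of_le hhi hWh₁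
    have h2ρ2 : 2*ρ' < norm η₂ * Real.sin θ := lt_of_lt_of_le hhi hWh₂
    obtain ⟨m, hm⟩ : ∃ m : ℤ, m = ⌊xco η₁ η₂ (z - ξ)⌋ := ⟨_, rfl⟩
    obtain ⟨n, hn⟩ : ∃ n : ℤ, n = ⌊yco η₁ η₂ (z - ξ)⌋ := ⟨_, rfl⟩
    obtain ⟨d₀, hd₀⟩ : ∃ d : ℂ, d = (m:ℂ)*η₁ + (n:ℂ)*η₂ := ⟨_, rfl⟩
    have hd₀lat : d₀ ∈ lat η₁ η₂ := ⟨m, n, hd₀⟩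
    obtain ⟨p, hp⟩ : ∃ p : ℂ, p = z - d₀ := ⟨_, rfl⟩
    obtain ⟨u, hu⟩ : ∃ u : ℝ, u = xco η₁ η₂ (z - ξ) - m := ⟨_, rfl⟩
    obtain ⟨v, hv⟩ : ∃ v : ℝ, v = yco η₁ η₂ (z - ξ) - n := ⟨_, rfl⟩
    have hxp : xco η₁ η₂ (p - ξ) = u := by
      have e1 : p - ξ = (z - ξ) - d₀ := by rw [hp]; ring
      rw [e1, xco_sub, hd₀, show ((m:ℂ)*η₁ + (n:ℂ)*η₂) = (((m:ℝ)):ℂ)*η₁ + (((n:ℝ)):ℂ)*η₂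
        by push_cast; ring, xco_combo η₁ η₂ hdet, hu]
    have hyp : yco η₁ η₂ (p - ξ) = v := by
      have e1 : p - ξ = (z - ξ) - d₀ := by rw [hp]; ring
      rw [e1, yco_sub, hd₀, show ((m:ℂ)*η₁ + (n:ℂ)*η₂) = (((m:ℝ)):ℂ)*η₁ + (((n:ℝ)):ℂ)*η₂
        by push_cast; ring, yco_combo η₁ η₂ hdet, hv]
    have hu0 : 0 ≤ u := by rw [hu, hm]; linarith [Int.floor_le (xco η₁ η₂ (z - ξ))]
    have hu1 : u ≤ 1 := by
      rw [hu, hm]; linarith [Int.lt_floor_add_one (xco η₁ η₂ (z - ξ))]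
    have hv0 : 0 ≤ v := by rw [hv, hn]; linarith [Int.floor_le (yco η₁ η₂ (z - ξ))]
    have hv1 : v ≤ 1 := by
      rw [hv, hn]; linarith [Int.lt_floor_add_one (yco η₁ η₂ (z - ξ))]
    have hpξ : p - ξ = ((u:ℝ):ℂ)*η₁ + ((v:ℝ):ℂ)*η₂ := by
      have h := recon η₁ η₂ hdet (p - ξ)
      rw [hxp, hyp] at h
      exact h
    rcases maincoord (Real.cos θ) (Real.sin θ) (nu1 θ) ρ'
        (norm η₁ * Real.sin θ) (norm η₂ * Real.sin θ) u v
        hsθ hpyth hν hρ'pos hh₁ hh₂ h2ρ1 h2ρ2 hu0 hu1 hv0 hv1 with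
      ⟨cu, cv, hcu, hcv, hle⟩ | ⟨qu, qv, hq1, hq2, hq3, hq4, hle⟩
    · -- corner case
      refine ⟨ξ + ((cu:ℝ):ℂ)*η₁ + ((cv:ℝ):ℂ)*η₂ + d₀, ?_, ?_⟩
      · refine Set.mem_image2.2 ⟨ξ, Set.mem_union_left _ rfl,
          ((cu:ℝ):ℂ)*η₁ + ((cv:ℝ):ℂ)*η₂ + d₀, ?_, by ring⟩
        rcases hcu with rfl | rfl <;> rcases hcv with rfl | rfl
        · exact ⟨m, n, by rw [hd₀]; push_cast; ring⟩
        · exact ⟨m, n+1, by rw [hd₀]; push_cast; ring⟩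
        · exact ⟨m+1, n, by rw [hd₀]; push_cast; ring⟩
        · exact ⟨m+1, n+1, by rw [hd₀]; push_cast; ring⟩
      · rw [Complex.dist_eq]
        have e1 : z - (ξ + ((cu:ℝ):ℂ)*η₁ + ((cv:ℝ):ℂ)*η₂ + d₀)
            = ((u-cu : ℝ):ℂ)*η₁ + ((v-cv : ℝ):ℂ)*η₂ := by
          have e2 : z - (ξ + ((cu:ℝ):ℂ)*η₁ + ((cv:ℝ):ℂ)*η₂ + d₀)
              = (p - ξ) - (((cu:ℝ):ℂ)*η₁ + ((cv:ℝ):ℂ)*η₂) := by rw [hp]; ring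
          rw [e2, hpξ]; push_cast; ring
        rw [e1]
        exact habs_le (u-cu) (v-cv) (nu1 θ * ρ') (by positivity)
          (by calc (norm η₁*Real.sin θ*(u-cu))^2
                + 2*Real.cos θ*(norm η₁*Real.sin θ)*(norm η₂*Real.sin θ)*(u-cu)*(v-cv)
                + (norm η₂*Real.sin θ*(v-cv))^2
              = (norm η₁*Real.sin θ*(u-cu))^2
                + 2*Real.cos θ*(norm η₁*Real.sin θ)*(norm η₂*Real.sin θ)
                  *(u-cu)*(v-cv)
                + (norm η₂*Real.sin θ*(v-cv))^2 := by ring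
            _ ≤ (nu1 θ*ρ'*Real.sin θ)^2 := by
                have e3 : ∀ A B C D : ℝ, (A*(u-cu))^2 + 2*C*A*B*(u-cu)*(v-cv) + (B*(v-cv))^2
                    = (A*(u-cu))^2 + 2*C*A*B*(u-cu)*(v-cv) + (B*(v-cv))^2 := fun _ _ _ _ => rfl
                calc _ = (norm η₁*Real.sin θ*(u-cu))^2
                    + 2*Real.cos θ*(norm η₁*Real.sin θ)*(norm η₂*Real.sin θ)
                      *(u-cu)*(v-cv)
                    + (norm η₂*Real.sin θ*(v-cv))^2 := by ring
                  _ ≤ _ := by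
                      have := hle
                      linarith [hle]
            _ = (nu1 θ * ρ' * Real.sin θ)^2 := by ring)
    · -- interior point case
      obtain ⟨q, hq⟩ : ∃ q : ℂ, q = ξ + ((qu:ℝ):ℂ)*η₁ + ((qv:ℝ):ℂ)*η₂ := ⟨_, rfl⟩
      obtain ⟨e, helat, hedist⟩ := covRad_attained η₁ η₂ hdet ((β:ℂ)*ζ*q - ξ)
      obtain ⟨w, hw⟩ : ∃ w : ℂ, w = (ξ + e)/((β:ℂ)*ζ) := ⟨_, rfl⟩
      have hbzw : (β:ℂ)*ζ*w - ξ = e := by rw [hw]; field_simp; ring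
      have hqw : norm (q - w) ≤ covRad η₁ η₂ / β := by
        have e1 : q - w = ((β:ℂ)*ζ*q - ξ - e)/((β:ℂ)*ζ) := by
          rw [hw]; field_simp; ring
        rw [e1, norm_div, hbzabs]
        have e2 : dist ((β:ℂ)*ζ*q - ξ) e = norm ((β:ℂ)*ζ*q - ξ - e) := by
          rw [Complex.dist_eq]
        rw [e2] at hedist
        exact div_le_div_of_nonneg_right hedist hβ0.le |>.trans_eq rfl
      -- coordinates of w
      have hxwq : |xco η₁ η₂ (w - ξ) - qu| * (norm η₁ * Real.sin θ)
          ≤ covRad η₁ η₂ / β := by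
        have e1 : xco η₁ η₂ (w - ξ) - qu = xco η₁ η₂ (w - q) := by
          have e2 := xco_sub η₁ η₂ (w - ξ) (q - ξ)
          have e0 : (w - ξ) - (q - ξ) = w - q := by ring
          rw [e0] at e2
          have e3 : q - ξ = ((qu:ℝ):ℂ)*η₁ + ((qv:ℝ):ℂ)*η₂ := by rw [hq]; ring
          have e4 := xco_combo η₁ η₂ hdet qu qv
          rw [← e3] at e4
          rw [e2, e4]
        rw [e1]
        have h2 := xco_lip η₁ η₂ (w - q)
        rw [habsdet] at h2
        calc |xco η₁ η₂ (w - q)| * (norm η₁ * Real.sin θ)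
            ≤ (norm (w-q) * norm η₂
                / (norm η₁ * norm η₂ * Real.sin θ))
              * (norm η₁ * Real.sin θ) :=
              mul_le_mul_of_nonneg_right h2 hh₁.le
          _ = norm (w-q) := by field_simp
          _ = norm (q-w) := by rw [norm_sub_rev]
          _ ≤ covRad η₁ η₂ / β := hqw
      have hywq : |yco η₁ η₂ (w - ξ) - qv| * (norm η₂ * Real.sin θ)
          ≤ covRad η₁ η₂ / β := by
        have e1 : yco η₁ η₂ (w - ξ) - qv = yco η₁ η₂ (w - q) := by
          have e2 := yco_sub η₁ η₂ (w - ξ) (q - ξ)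
          have e0 : (w - ξ) - (q - ξ) = w - q := by ring
          rw [e0] at e2
          have e3 : q - ξ = ((qu:ℝ):ℂ)*η₁ + ((qv:ℝ):ℂ)*η₂ := by rw [hq]; ring
          have e4 := yco_combo η₁ η₂ hdet qu qv
          rw [← e3] at e4
          rw [e2, e4]
        rw [e1]
        have h2 := yco_lip η₁ η₂ (w - q)
        rw [habsdet] at h2
        calc |yco η₁ η₂ (w - q)| * (norm η₂ * Real.sin θ)
            ≤ (norm (w-q) * norm η₁
                / (norm η₁ * norm η₂ * Real.sin θ))
              * (norm η₂ * Real.sin θ) :=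
              mul_le_mul_of_nonneg_right h2 hh₂.le
          _ = norm (w-q) := by field_simp
          _ = norm (q-w) := by rw [norm_sub_rev]
          _ ≤ covRad η₁ η₂ / β := hqw
      have key1 : qu*(norm η₁*Real.sin θ) - covRad η₁ η₂/β
          ≤ xco η₁ η₂ (w-ξ)*(norm η₁*Real.sin θ) := by
        have h5 : qu - xco η₁ η₂ (w-ξ) ≤ |xco η₁ η₂ (w-ξ) - qu| := by
          rw [abs_sub_comm]; exact le_abs_self _
        have h6 := mul_le_mul_of_nonneg_right h5 hh₁.le
        have h7 : (qu - xco η₁ η₂ (w-ξ))*(norm η₁*Real.sin θ)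
            = qu*(norm η₁*Real.sin θ)
              - xco η₁ η₂ (w-ξ)*(norm η₁*Real.sin θ) := by ring
        linarith [hxwq, h6, h7.symm.trans_le h6]
      have key2 : xco η₁ η₂ (w-ξ)*(norm η₁*Real.sin θ)
          ≤ qu*(norm η₁*Real.sin θ) + covRad η₁ η₂/β := by
        have h5 : xco η₁ η₂ (w-ξ) - qu ≤ |xco η₁ η₂ (w-ξ) - qu| := le_abs_self _
        have h6 := mul_le_mul_of_nonneg_right h5 hh₁.le
        have h7 : (xco η₁ η₂ (w-ξ) - qu)*(norm η₁*Real.sin θ)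
            = xco η₁ η₂ (w-ξ)*(norm η₁*Real.sin θ)
              - qu*(norm η₁*Real.sin θ) := by ring
        linarith [hxwq, h7.symm.trans_le h6]
      have key3 : qv*(norm η₂*Real.sin θ) - covRad η₁ η₂/β
          ≤ yco η₁ η₂ (w-ξ)*(norm η₂*Real.sin θ) := by
        have h5 : qv - yco η₁ η₂ (w-ξ) ≤ |yco η₁ η₂ (w-ξ) - qv| := by
          rw [abs_sub_comm]; exact le_abs_self _
        have h6 := mul_le_mul_of_nonneg_right h5 hh₂.le
        have h7 : (qv - yco η₁ η₂ (w-ξ))*(norm η₂*Real.sin θ)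
            = qv*(norm η₂*Real.sin θ)
              - yco η₁ η₂ (w-ξ)*(norm η₂*Real.sin θ) := by ring
        linarith [hywq, h7.symm.trans_le h6]
      have key4 : yco η₁ η₂ (w-ξ)*(norm η₂*Real.sin θ)
          ≤ qv*(norm η₂*Real.sin θ) + covRad η₁ η₂/β := by
        have h5 : yco η₁ η₂ (w-ξ) - qv ≤ |yco η₁ η₂ (w-ξ) - qv| := le_abs_self _
        have h6 := mul_le_mul_of_nonneg_right h5 hh₂.le
        have h7 : (yco η₁ η₂ (w-ξ) - qv)*(norm η₂*Real.sin θ)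
            = yco η₁ η₂ (w-ξ)*(norm η₂*Real.sin θ)
              - qv*(norm η₂*Real.sin θ) := by ring
        linarith [hywq, h7.symm.trans_le h6]
      have hxw0 : 0 ≤ xco η₁ η₂ (w - ξ) := by
        by_contra hneg
        push_neg at hneg
        have h6 : xco η₁ η₂ (w-ξ)*(norm η₁*Real.sin θ) < 0 :=
          mul_neg_of_neg_of_pos hneg hh₁
        linarith
      have hxw1 : xco η₁ η₂ (w - ξ) < 1 := by
        by_contra hge
        push_neg at hge
        have h6 : norm η₁*Real.sin θ ≤ xco η₁ η₂ (w-ξ)*(norm η₁*Real.sin θ) := by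
          have := mul_le_mul_of_nonneg_right hge hh₁.le
          linarith [one_mul (norm η₁*Real.sin θ) ▸ this]
        linarith
      have hyw0 : 0 ≤ yco η₁ η₂ (w - ξ) := by
        by_contra hneg
        push_neg at hneg
        have h6 : yco η₁ η₂ (w-ξ)*(norm η₂*Real.sin θ) < 0 :=
          mul_neg_of_neg_of_pos hneg hh₂
        linarith
      have hyw1 : yco η₁ η₂ (w - ξ) < 1 := by
        by_contra hge
        push_neg at hge
        have h6 : norm η₂*Real.sin θ ≤ yco η₁ η₂ (w-ξ)*(norm η₂*Real.sin θ) := by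
          have := mul_le_mul_of_nonneg_right hge hh₂.le
          linarith [one_mul (norm η₂*Real.sin θ) ▸ this]
        linarith
      have hwfund : w ∈ fund ξ η₁ η₂ := by
        refine ⟨xco η₁ η₂ (w-ξ), yco η₁ η₂ (w-ξ), ⟨hxw0, hxw1⟩, ⟨hyw0, hyw1⟩, ?_⟩
        have h := recon η₁ η₂ hdet (w - ξ)
        linear_combination h
      refine ⟨w + d₀, Set.mem_image2.2 ⟨w, Set.mem_union_right _
        ⟨hwfund, by rw [hbzw]; exact helat⟩, d₀, hd₀lat, rfl⟩, ?_⟩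
      rw [Complex.dist_eq]
      have e5 : z - (w + d₀) = (p - q) + (q - w) := by rw [hp]; ring
      have hpq : norm (p - q) ≤ (nu1 θ - 1)*ρ' := by
        have e6 : p - q = ((u - qu : ℝ):ℂ)*η₁ + ((v - qv : ℝ):ℂ)*η₂ := by
          have e7 : p - q = (p - ξ) - (q - ξ) := by ring
          rw [e7, hpξ, hq]; push_cast; ring
        rw [e6]
        exact habs_le _ _ _ (by nlinarith) (by linarith [hle])
      have efin : (nu1 θ - 1)*ρ' = nu1 θ*ρ' - ρ' := by ring
      calc norm (z - (w+d₀)) = norm ((p - q) + (q - w)) := by rw [e5]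
        _ ≤ norm (p - q) + norm (q - w) := norm_add_le _ _
        _ ≤ (nu1 θ - 1)*ρ' + covRad η₁ η₂/β := by linarith [hpq, hqw]
        _ ≤ nu1 θ * ρ' := by linarith [hlo]
    -- finite minimum argument
  have hfund_bd : ∀ s' ∈ ({ξ} ∪ {z' : ℂ | z' ∈ fund ξ η₁ η₂ ∧
      (β:ℂ)*ζ*z' - ξ ∈ lat η₁ η₂} : Set ℂ),
      norm (s' - ξ) ≤ norm η₁ + norm η₂ := by
    rintro s' (rfl | ⟨⟨xx, yy, hxx, hyy, rfl⟩, -⟩)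
    · simp only [sub_self, norm_zero]
      positivity
    · have e : ξ + (xx:ℂ)*η₁ + (yy:ℂ)*η₂ - ξ = (xx:ℂ)*η₁ + (yy:ℂ)*η₂ := by ring
      rw [e]
      calc norm ((xx:ℂ)*η₁ + (yy:ℂ)*η₂)
          ≤ norm ((xx:ℂ)*η₁) + norm ((yy:ℂ)*η₂) := norm_add_le _ _
        _ ≤ norm η₁ + norm η₂ := by
            rw [norm_mul, norm_mul, Complex.norm_real, Real.norm_eq_abs, Complex.norm_real, Real.norm_eq_abs]
            have e1 : |xx| ≤ 1 := by rw [abs_of_nonneg hxx.1]; linarith [hxx.2]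
            have e2 : |yy| ≤ 1 := by rw [abs_of_nonneg hyy.1]; linarith [hyy.2]
            nlinarith [abs_nonneg xx, abs_nonneg yy]
  have hTfin : {z' : ℂ | z' ∈ fund ξ η₁ η₂ ∧ (β:ℂ)*ζ*z' - ξ ∈ lat η₁ η₂}.Finite := by
    apply Set.Finite.subset (Set.Finite.image (fun e => (ξ+e)/((β:ℂ)*ζ))
      (lat_fin η₁ η₂ hdet ((β:ℂ)*ζ*ξ - ξ) (β*(norm η₁ + norm η₂))))
    rintro w' ⟨hwf, hwl⟩
    refine ⟨(β:ℂ)*ζ*w' - ξ, ⟨hwl, ?_⟩, ?_⟩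
    · have e : ((β:ℂ)*ζ*w' - ξ) - ((β:ℂ)*ζ*ξ - ξ) = ((β:ℂ)*ζ)*(w' - ξ) := by ring
      rw [e, norm_mul, hbzabs]
      exact mul_le_mul_of_nonneg_left
        (hfund_bd w' (Set.mem_union_right _ ⟨hwf, hwl⟩)) hβ0.le
    · field_simp
      ring
  set W : ℝ := min (norm η₁) (norm η₂) * Real.sin θ with hW
  set r : ℝ := covRad η₁ η₂ / β with hr
  have hν0 : 0 < nu1 θ := by linarith
  set ρ'₀ : ℝ := (r + W/2)/2 with hρ'₀
  have h1 : r < ρ'₀ := by rw [hρ'₀]; linarith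
  have h2 : 2*ρ'₀ < W := by rw [hρ'₀]; linarith
  obtain ⟨s₀, hs₀B, hs₀d⟩ := main ρ'₀ h1 h2
  set M : ℝ := nu1 θ*ρ'₀ + 1 with hM
  have hKfin : {s' : ℂ | s' ∈ (Set.image2 (· + ·)
      ({ξ} ∪ {z' : ℂ | z' ∈ fund ξ η₁ η₂ ∧ (β : ℂ) * ζ * z' - ξ ∈ lat η₁ η₂})
      (lat η₁ η₂)) ∧ dist z s' ≤ M}.Finite := by
    apply Set.Finite.subset (Set.Finite.image2 (· + ·)
      ((Set.finite_singleton ξ).union hTfin)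
      (lat_fin η₁ η₂ hdet (z - ξ) (M + (norm η₁ + norm η₂))))
    rintro s' ⟨hsB, hsd⟩
    obtain ⟨a, ha, b, hb, rfl⟩ := Set.mem_image2.1 hsB
    refine Set.mem_image2.2 ⟨a, ha, b, ⟨hb, ?_⟩, rfl⟩
    have e : b - (z - ξ) = ((a+b) - z) + (ξ - a) := by ring
    calc norm (b - (z-ξ)) = norm (((a+b) - z) + (ξ - a)) := by rw [e]
      _ ≤ norm ((a+b) - z) + norm (ξ - a) := norm_add_le _ _
      _ ≤ M + (norm η₁ + norm η₂) := by
          have e1 : norm ((a+b) - z) = dist z (a+b) := by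
            rw [Complex.dist_eq, norm_sub_rev]
          have e2 : norm (ξ - a) = norm (a - ξ) := by
            rw [norm_sub_rev]
          rw [e1, e2]
          have := hfund_bd a ha
          linarith
  have hne : hKfin.toFinset.Nonempty :=
    ⟨s₀, hKfin.mem_toFinset.2 ⟨hs₀B, by rw [hM]; linarith⟩⟩
  obtain ⟨smin, hsmem, hsmin⟩ := hKfin.toFinset.exists_min_image (fun s' => dist z s') hne
  rw [Set.Finite.mem_toFinset] at hsmem
  refine ⟨smin, hsmem.1, ?_⟩
  have htarget : nu1 θ * covRad η₁ η₂ / β = nu1 θ * r := by rw [hr]; ring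
  rw [htarget]
  by_contra hgt
  push_neg at hgt
  have hε0a : 0 < (dist z smin - nu1 θ*r)/(2*nu1 θ) := by
    apply div_pos (by linarith) (by linarith)
  have hε0b : 0 < (W/2 - r)/2 := by linarith
  set ε : ℝ := min ((dist z smin - nu1 θ*r)/(2*nu1 θ)) ((W/2 - r)/2) with hε
  have hε0 : 0 < ε := lt_min hε0a hε0b
  have hεb : ε ≤ (W/2 - r)/2 := min_le_right _ _
  have hεa : ε ≤ (dist z smin - nu1 θ*r)/(2*nu1 θ) := min_le_left _ _
  have h3 : r < r + ε := by linarith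
  have h4 : 2*(r+ε) < W := by linarith
  obtain ⟨s', hs'B, hs'd⟩ := main (r+ε) h3 h4
  have h5 : r + ε ≤ ρ'₀ := by rw [hρ'₀]; linarith
  have h6 : dist z s' ≤ M := by
    have h7 : nu1 θ*(r+ε) ≤ nu1 θ*ρ'₀ := mul_le_mul_of_nonneg_left h5 hν0.le
    rw [hM]; linarith
  have h8 := hsmin s' (hKfin.mem_toFinset.2 ⟨hs'B, h6⟩)
  have h9 : nu1 θ*ε ≤ (dist z smin - nu1 θ*r)/2 := by
    calc nu1 θ*ε ≤ nu1 θ*((dist z smin - nu1 θ*r)/(2*nu1 θ)) :=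
          mul_le_mul_of_nonneg_left hεa hν0.le
      _ = (dist z smin - nu1 θ*r)/2 := by
          field_simp
  have h10 : nu1 θ*(r+ε) = nu1 θ*r + nu1 θ*ε := by ring
  linarith
end
end
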